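/- arXiv:1910.14483 — 13 statements merged into one kernel-verified Lean document; each statement's English description precedes it below -/
import Mathlib

section
/- Let X be a topological space, U an open subset, and p a point not in the interior of the closure of U. If A and B are disjoint open sets in X, then p is not in the intersection of interior(closure(U ∪ A)) and interior(closure(U ∪ B)). -/
open Set

theorem stmt0 {X : Type*} [TopologicalSpace X] {U A B : Set X} {p : X}
    (hU : IsOpen U) (hA : IsOpen A) (hB : IsOpen B) (hAB : A ∩ B = ∅)
    (hp : p ∉ interior (closure U)) :
    p ∉ interior (closure (U ∪ A)) ∩ interior (closure (U ∪ B)) := by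
  rintro ⟨h1, h2⟩
  apply hp
  set W := interior (closure (U ∪ A)) ∩ interior (closure (U ∪ B)) with hW
  have hWopen : IsOpen W := isOpen_interior.inter isOpen_interior
  have hWsub : W ⊆ closure U := by
    intro x hx
    rw [mem_closure_iff]
    intro N hN hxN
    have hNW : IsOpen (N ∩ W) := hN.inter hWopen
    have hxNW : x ∈ N ∩ W := ⟨hxN, hx⟩
    have h3 : x ∈ closure (U ∪ A) := interior_subset hx.1
    rw [mem_closure_iff] at h3
    obtain ⟨y, hyNW, hyUA⟩ := h3 (N ∩ W) hNW hxNW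
    rcases hyUA with hyU | hyA
    · exact ⟨y, hyNW.1, hyU⟩
    · have h4 : y ∈ closure (U ∪ B) := interior_subset hyNW.2.2
      rw [mem_closure_iff] at h4
      obtain ⟨z, hz, hzUB⟩ := h4 (N ∩ W ∩ A) ((hNW.inter hA)) ⟨hyNW, hyA⟩
      rcases hzUB with hzU | hzB
      · exact ⟨z, hz.1.1, hzU⟩
      · have hz2 : z ∈ A ∩ B := ⟨hz.2, hzB⟩
        rw [hAB] at hz2
        exact hz2.elim
  exact interior_maximal hWsub hWopen ⟨h1, h2⟩
end

section
/- Every infinite subset Y of a Hausdorff space X has an infinite fluffy subset, i.e., there exist an infinite subset Z ⊆ Y and a pairwise disjoint family {U_z : z ∈ Z} of nonempty open sets such that z ∈ closure(U_z) for each z ∈ Z. -/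
open Set

def Fluffy {X : Type*} [TopologicalSpace X] (Y : Set X) : Prop :=
  ∃ U : X → Set X, (∀ y ∈ Y, IsOpen (U y) ∧ (U y).Nonempty ∧ y ∈ closure (U y)) ∧
    Y.PairwiseDisjoint U

lemma fluffy_step {X : Type*} [TopologicalSpace X] [T2Space X] {Y : Set X}
    (A : Set X) (hA : IsOpen A) (hinf : (Y ∩ closure A).Infinite) :
    ∃ (y : X) (U A' : Set X), y ∈ Y ∧ IsOpen U ∧ U.Nonempty ∧ U ⊆ A ∧ y ∈ closure U ∧
      IsOpen A' ∧ A' ⊆ A ∧ Disjoint U A' ∧ y ∉ closure A' ∧ (Y ∩ closure A').Infinite := by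
  obtain ⟨p, hp, q, hq, hpq⟩ := hinf.nontrivial
  obtain ⟨P, Q, hP, hQ, hpP, hqQ, hPQ⟩ := t2_separation hpq
  have hpcl : p ∈ closure (A ∩ P) := by
    rw [mem_closure_iff]
    intro O hO hpO
    obtain ⟨x, ⟨hxO, hxP⟩, hxA⟩ := mem_closure_iff.mp hp.2 (O ∩ P) (hO.inter hP) ⟨hpO, hpP⟩
    exact ⟨x, hxO, hxA, hxP⟩
  have hqcl : q ∈ closure (A ∩ Q) := by
    rw [mem_closure_iff]
    intro O hO hqO
    obtain ⟨x, ⟨hxO, hxQ⟩, hxA⟩ := mem_closure_iff.mp hq.2 (O ∩ Q) (hO.inter hQ) ⟨hqO, hqQ⟩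
    exact ⟨x, hxO, hxA, hxQ⟩
  have hAPQc : closure (A ∩ P) ⊆ Qᶜ := by
    apply closure_minimal _ (isClosed_compl_iff.mpr hQ)
    intro x ⟨_, hxP⟩ hxQ
    exact hPQ.ne_of_mem hxP hxQ rfl
  by_cases h : (Y ∩ closure (A ∩ P)).Infinite
  · refine ⟨q, A ∩ Q, A ∩ P, hq.1, hA.inter hQ, closure_nonempty_iff.mp ⟨q, hqcl⟩,
      inter_subset_left, hqcl, hA.inter hP, inter_subset_left, ?_, fun hc => hAPQc hc hqQ, h⟩
    exact Disjoint.mono inter_subset_right inter_subset_right hPQ.symm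
  · refine ⟨p, A ∩ P, A \ closure (A ∩ P), hp.1, hA.inter hP,
      closure_nonempty_iff.mp ⟨p, hpcl⟩, inter_subset_left, hpcl,
      hA.sdiff isClosed_closure, diff_subset, ?_, ?_, ?_⟩
    · exact disjoint_left.mpr fun x hx hx' => hx'.2 (subset_closure hx)
    · have : closure (A \ closure (A ∩ P)) ⊆ Pᶜ := by
        apply closure_minimal _ (isClosed_compl_iff.mpr hP)
        intro x ⟨hxA, hxnc⟩ hxP
        exact hxnc (subset_closure ⟨hxA, hxP⟩)
      exact fun hc => this hc hpP
    · have hsub : Y ∩ closure A ⊆ (Y ∩ closure (A ∩ P)) ∪ (Y ∩ closure (A \ closure (A ∩ P))) := by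
        intro x ⟨hxY, hxc⟩
        have : closure A ⊆ closure (A ∩ P) ∪ closure (A \ closure (A ∩ P)) := by
          have h1 : A ⊆ closure (A ∩ P) ∪ (A \ closure (A ∩ P)) := by
            intro x hx
            by_cases hx' : x ∈ closure (A ∩ P)
            · exact Or.inl hx'
            · exact Or.inr ⟨hx, hx'⟩
          calc closure A ⊆ closure (closure (A ∩ P) ∪ (A \ closure (A ∩ P))) := closure_mono h1
            _ ⊆ _ := by
                rw [closure_union, closure_closure]
        rcases this hxc with h' | h'
        · exact Or.inl ⟨hxY, h'⟩
        · exact Or.inr ⟨hxY, h'⟩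
      rcases Set.infinite_union.mp (hinf.mono hsub) with h' | h'
      · exact absurd h' h
      · exact h'

theorem stmt1 {X : Type*} [TopologicalSpace X] [T2Space X] {Y : Set X} (hY : Y.Infinite) :
    ∃ Z ⊆ Y, Z.Infinite ∧ Fluffy Z := by
  have step : ∀ A : {A : Set X // IsOpen A ∧ (Y ∩ closure A).Infinite},
      ∃ (y : X) (U : Set X) (A' : {A : Set X // IsOpen A ∧ (Y ∩ closure A).Infinite}),
        y ∈ Y ∧ IsOpen U ∧ U.Nonempty ∧ U ⊆ A.1 ∧ y ∈ closure U ∧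
        A'.1 ⊆ A.1 ∧ Disjoint U A'.1 ∧ y ∉ closure A'.1 := by
    rintro ⟨A, hAo, hAinf⟩
    obtain ⟨y, U, A', hy, hUo, hUne, hUA, hycl, hA'o, hA'A, hdis, hynA, hA'inf⟩ :=
      fluffy_step A hAo hAinf
    exact ⟨y, U, ⟨A', hA'o, hA'inf⟩, hy, hUo, hUne, hUA, hycl, hA'A, hdis, hynA⟩
  choose pt opn nxt hmem hUo hUne hUA hcl hsub hdis hnotin using step
  have hA0 : IsOpen (univ : Set X) ∧ (Y ∩ closure (univ : Set X)).Infinite := by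
    simp [hY]
  set f : ℕ → {A : Set X // IsOpen A ∧ (Y ∩ closure A).Infinite} :=
    fun n => nxt^[n] ⟨univ, hA0⟩ with hf
  have hfs : ∀ n, f (n + 1) = nxt (f n) := fun n => Function.iterate_succ_apply' _ _ _
  have hanti : ∀ n m, n ≤ m → (f m).1 ⊆ (f n).1 := by
    intro n m hnm
    induction m with
    | zero => simp_all
    | succ k ih =>
      rcases Nat.lt_or_ge n (k+1) with h | h
      · exact (by rw [hfs]; exact hsub (f k) : (f (k+1)).1 ⊆ (f k).1).trans
          (ih (Nat.lt_succ_iff.mp h))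
      · have : n = k + 1 := le_antisymm hnm h
        subst this; rfl
  set y : ℕ → X := fun n => pt (f n) with hy
  set U : ℕ → Set X := fun n => opn (f n) with hUdef
  have key : ∀ n m, n < m → y m ∈ closure (f (n+1)).1 ∧ Disjoint (U n) (U m) := by
    intro n m hnm
    have h1 : (f m).1 ⊆ (f (n+1)).1 := hanti _ _ hnm
    have h2 : U m ⊆ (f m).1 := hUA (f m)
    have hUm : U m ⊆ (f (n+1)).1 := h2.trans h1
    constructor
    · exact closure_mono hUm (hcl (f m))
    · have : Disjoint (U n) (f (n+1)).1 := by rw [hfs]; exact hdis (f n)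
      exact this.mono_right hUm
  have hyinj : Function.Injective y := by
    intro n m hnm
    by_contra hne
    rcases Nat.lt_or_ge n m with h | h
    · have h1 := (key n m h).1
      rw [← hnm, hfs] at h1
      exact hnotin (f n) h1
    · have h' : m < n := lt_of_le_of_ne h (Ne.symm hne)
      have h1 := (key m n h').1
      rw [hnm, hfs] at h1
      exact hnotin (f m) h1
  have hdisUnm : ∀ n m, n ≠ m → Disjoint (U n) (U m) := by
    intro n m hnm
    rcases Nat.lt_or_ge n m with h | h
    · exact (key n m h).2
    · exact ((key m n (lt_of_le_of_ne h (Ne.symm hnm))).2).symm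
  refine ⟨range y, ?_, infinite_range_of_injective hyinj, ?_⟩
  · rintro _ ⟨n, rfl⟩; exact hmem (f n)
  · refine ⟨fun x => ⋃ (n : ℕ) (_ : y n = x), U n, ?_, ?_⟩
    · rintro _ ⟨n, rfl⟩
      have heq : (⋃ (m : ℕ) (_ : y m = y n), U m) = U n := by
        apply subset_antisymm
        · refine iUnion₂_subset fun m hm => ?_
          rw [hyinj hm]
        · exact fun x hx => mem_iUnion₂.mpr ⟨n, rfl, hx⟩
      dsimp only
      rw [heq]
      exact ⟨hUo (f n), hUne (f n), hcl (f n)⟩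
    · rintro _ ⟨n, rfl⟩ _ ⟨m, rfl⟩ hne
      have heqn : (⋃ (k : ℕ) (_ : y k = y n), U k) = U n := by
        apply subset_antisymm
        · refine iUnion₂_subset fun k hk => ?_
          rw [hyinj hk]
        · exact fun x hx => mem_iUnion₂.mpr ⟨n, rfl, hx⟩
      have heqm : (⋃ (k : ℕ) (_ : y k = y m), U k) = U m := by
        apply subset_antisymm
        · refine iUnion₂_subset fun k hk => ?_
          rw [hyinj hk]
        · exact fun x hx => mem_iUnion₂.mpr ⟨m, rfl, hx⟩
      show Disjoint _ _
      dsimp only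
      rw [heqn, heqm]
      exact hdisUnm n m (fun h => hne (by rw [h]))
end

section
/- Let X be a Hausdorff space, p ∈ X, and {V_n : n ∈ ω} a decreasing sequence of open neighborhoods of p with ⋂_n closure(V_n) = {p}. If A ⊆ G with G open and p is an accumulation point of A, then there exists a pairwise disjoint family {U_n : n ∈ ω} of open sets with U_n ⊆ G ∩ V_n and A ∩ U_n ≠ ∅ for each n. -/
open Set

theorem stmt3 {X : Type*} [TopologicalSpace X] [T2Space X] {p : X} {V : ℕ → Set X}
    (hVo : ∀ n, IsOpen (V n)) (hVp : ∀ n, p ∈ V n) (hVdec : ∀ n, V (n + 1) ⊆ V n)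
    (hVint : ⋂ n, closure (V n) = {p})
    {G A : Set X} (hG : IsOpen G) (hAG : A ⊆ G) (hpA : p ∈ closure (A \ {p})) :
    ∃ U : ℕ → Set X, (∀ n, IsOpen (U n)) ∧ Pairwise (Function.onFun Disjoint U) ∧
      (∀ n, U n ⊆ G ∩ V n) ∧ ∀ n, (A ∩ U n).Nonempty := by
  -- V is antitone
  have hVmono : ∀ {m n : ℕ}, m ≤ n → V n ⊆ V m := by
    intro m n h
    induction h with
    | refl => exact subset_rfl
    | step h ih => exact (hVdec _).trans ih
  -- points of A \ {p} in every V n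
  have key : ∀ n : ℕ, ∃ x, x ∈ A ∧ x ≠ p ∧ x ∈ V n := by
    intro n
    rcases (mem_closure_iff.1 hpA) (V n) (hVo n) (hVp n) with ⟨x, hxV, hxA, hxp⟩
    exact ⟨x, hxA, by simpa using hxp, hxV⟩
  choose pt hptA hptp hptV using key
  -- every point ≠ p escapes some closure V k
  have esc : ∀ x : X, ∃ k, x ≠ p → x ∉ closure (V k) := by
    intro x
    by_cases hx : x = p
    · exact ⟨0, fun h => absurd hx h⟩
    · have : x ∉ ⋂ n, closure (V n) := by
        rw [hVint]; simpa using hx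
      rcases by simpa using this with ⟨k, hk⟩
      exact ⟨k, fun _ => hk⟩
  choose idx hidx using esc
  -- the index sequence
  let N : ℕ → ℕ := fun k => Nat.rec 0 (fun _ n => max (n + 1) (idx (pt n))) k
  have hN0 : N 0 = 0 := rfl
  have hNs : ∀ k, N (k + 1) = max (N k + 1) (idx (pt (N k))) := fun k => rfl
  have hNlt : ∀ k, N k < N (k + 1) := by
    intro k; rw [hNs]; exact lt_of_lt_of_le (Nat.lt_succ_self _) (le_max_left _ _)
  have hNmono : ∀ {j k : ℕ}, j ≤ k → N j ≤ N k := by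
    intro j k h
    induction h with
    | refl => exact le_rfl
    | step h ih => exact ih.trans (le_of_lt (hNlt _))
  have hNk : ∀ k, k ≤ N k := by
    intro k
    induction k with
    | zero => simp [hN0]
    | succ k ih => exact Nat.succ_le_of_lt (lt_of_le_of_lt ih (hNlt k))
  -- x_k escapes closure (V (N (k+1)))
  have hesc : ∀ k, pt (N k) ∉ closure (V (N (k + 1))) := by
    intro k hmem
    have h1 : closure (V (N (k + 1))) ⊆ closure (V (idx (pt (N k)))) :=
      closure_mono (hVmono (by rw [hNs]; exact le_max_right _ _))
    exact hidx _ (hptp _) (h1 hmem)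
  refine ⟨fun k => (G ∩ V (N k)) \ closure (V (N (k + 1))), ?_, ?_, ?_, ?_⟩
  · intro k
    exact ((hG.inter (hVo _)).sdiff isClosed_closure)
  · have hdis : ∀ j k : ℕ, j < k →
        Disjoint ((G ∩ V (N j)) \ closure (V (N (j + 1))))
          ((G ∩ V (N k)) \ closure (V (N (k + 1)))) := by
      intro j k h
      refine Set.disjoint_left.2 fun x hxj hxk => ?_
      exact hxj.2 (subset_closure (hVmono (hNmono (show j + 1 ≤ k by omega)) hxk.1.2))
    intro j k hjk
    rcases hjk.lt_or_gt with h | h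
    · exact hdis j k h
    · exact (hdis k j h).symm
  · intro k x hx
    exact ⟨hx.1.1, hVmono (hNk k) hx.1.2⟩
  · intro k
    exact ⟨pt (N k), hptA _, ⟨⟨hAG (hptA _), hptV _⟩, hesc k⟩⟩
end

section
/- Let X be a Hausdorff space in which every countably infinite strongly discrete subset has a complete accumulation point (equivalently, an accumulation point), and let Y ⊆ X be a countably infinite fluffy subset such that every y ∈ Y has a countable decreasing sequence of open neighborhoods whose closures intersect in {y}. Then there is a strongly discrete subset D of X with |D| = |Y| and Y ⊆ closure(D). -/
open Set

def StronglyDiscrete {X : Type*} [TopologicalSpace X] (D : Set X) : Prop :=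
  ∃ U : X → Set X, (∀ d ∈ D, IsOpen (U d) ∧ d ∈ U d) ∧ D.PairwiseDisjoint U

/-!
Pick the disjoint open sets `U y` witnessing that `Y` is fluffy. For `y ∉ U y`, the decreasing
neighbourhoods `V n` of `y` cut `U y` into disjoint open shells `V (n k) \ closure (V (n (k+1)))`,
each meeting `U y`; one point from each shell gives a countably infinite strongly discrete set.
Since `⋂ n, closure (V n) = {y}`, its only possible accumulation point is `y`, so the hypothesis
on `X` puts `y` in its closure. The union of these sets over `y ∈ Y` stays strongly discrete
because the `U y` are disjoint, and it is countably infinite, like `Y`.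
-/

open Filter Function

section

variable {X : Type*} [TopologicalSpace X]

theorem stronglyDiscrete_singleton (x : X) : StronglyDiscrete {x} :=
  ⟨fun _ => univ, fun _ _ => ⟨isOpen_univ, mem_univ _⟩, pairwiseDisjoint_singleton _ _⟩

theorem stronglyDiscrete_range {ι : Type*} {x : ι → X} {S : ι → Set X}
    (hS : ∀ i, IsOpen (S i)) (hx : ∀ i, x i ∈ S i) (hd : Pairwise (Disjoint on S)) :
    StronglyDiscrete (range x) := by
  refine ⟨fun z => ⋃ (i) (_ : x i = z), S i, ?_, ?_⟩
  · rintro _ ⟨i, rfl⟩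
    exact ⟨isOpen_biUnion fun j _ => hS j, mem_biUnion rfl (hx i)⟩
  · rintro _ ⟨i, rfl⟩ _ ⟨j, rfl⟩ hij
    simp only [onFun, disjoint_iUnion_left, disjoint_iUnion_right]
    intro j' hj' i' hi'
    exact hd fun h => hij (by subst h; exact hi'.symm.trans hj')

theorem StronglyDiscrete.iUnion {ι : Type*} {E U : ι → Set X} (hE : ∀ i, StronglyDiscrete (E i))
    (hU : ∀ i, IsOpen (U i)) (hEU : ∀ i, E i ⊆ U i) (hd : Pairwise (Disjoint on U)) :
    StronglyDiscrete (⋃ i, E i) := by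
  choose W hW hWd using hE
  refine ⟨fun d => ⋃ (i) (_ : d ∈ E i), W i d ∩ U i, ?_, ?_⟩
  · intro d hd
    obtain ⟨i, hi⟩ := mem_iUnion.1 hd
    exact ⟨isOpen_biUnion fun j hj => (hW j d hj).1.inter (hU j),
      mem_biUnion hi ⟨(hW i d hi).2, hEU i hi⟩⟩
  · intro d _ d' _ hdd'
    simp only [onFun, disjoint_iUnion_left, disjoint_iUnion_right]
    intro j hj i hi
    rcases eq_or_ne i j with rfl | hij
    · exact (hWd i hi hj hdd').mono inter_subset_left inter_subset_left
    · exact (hd hij).mono inter_subset_right inter_subset_right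

theorem mem_iInter_closure_of_mem_closure_range_diff [T1Space X] {V : ℕ → Set X} {x : ℕ → X}
    {z : X} (hx : ∀ m, ∀ᶠ k in atTop, x k ∈ V m) (hz : z ∈ closure (range x \ {z})) :
    z ∈ ⋂ m, closure (V m) := by
  refine mem_iInter.2 fun m => ?_
  obtain ⟨K, hK⟩ := eventually_atTop.1 (hx m)
  have hsub : range x \ {z} ⊆ (x '' Iio K \ {z}) ∪ closure (V m) := by
    rintro _ ⟨⟨k, rfl⟩, hkz⟩
    rcases lt_or_ge k K with hk | hk
    · exact Or.inl ⟨mem_image_of_mem x hk, hkz⟩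
    · exact Or.inr (subset_closure (hK k hk))
  have hclosed : IsClosed ((x '' Iio K \ {z}) ∪ closure (V m)) :=
    ((finite_Iio K).image x).sdiff.isClosed.union isClosed_closure
  rcases hclosed.closure_subset_iff.2 hsub hz with h | h
  · exact absurd rfl h.2
  · exact h

section Shells

variable {U : Set X} {V : ℕ → Set X} {y : X}

theorem exists_seq_mem_shells (hV : Antitone V) (hUV : ∀ n, (U ∩ V n).Nonempty)
    (hVy : ⋂ n, closure (V n) = {y}) (hyU : y ∉ U) :
    ∃ (n : ℕ → ℕ) (x : ℕ → X), StrictMono n ∧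
      ∀ k, x k ∈ U ∧ x k ∈ V (n k) \ closure (V (n (k + 1))) := by
  have step : ∀ m, ∃ m', m < m' ∧ ∃ x ∈ U ∩ V m, x ∉ closure (V m') := by
    intro m
    obtain ⟨x, hxU, hxV⟩ := hUV m
    have hxy : x ∉ ⋂ n, closure (V n) := hVy ▸ fun h => hyU (h ▸ hxU)
    obtain ⟨m', hm'⟩ := by simpa only [mem_iInter, not_forall] using hxy
    exact ⟨max m' (m + 1), by omega, x, ⟨hxU, hxV⟩, fun h =>
      hm' (closure_mono (hV (le_max_left _ _)) h)⟩
  choose next hnext x hxUV hx using step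
  refine ⟨fun k => next^[k] 0, fun k => x (next^[k] 0),
    strictMono_nat_of_lt_succ fun k => ?_, fun k => ⟨(hxUV _).1, (hxUV _).2, ?_⟩⟩
  · simpa only [iterate_succ_apply'] using hnext _
  · simpa only [iterate_succ_apply'] using hx _

theorem pairwise_disjoint_shells (hV : Antitone V) {n : ℕ → ℕ} (hn : StrictMono n) :
    Pairwise (Disjoint on fun k => V (n k) \ closure (V (n (k + 1)))) := by
  refine (pairwise_disjoint_on _).2 fun i j hij => disjoint_left.2 fun z hzi hzj => hzi.2 ?_
  exact subset_closure (hV (hn.monotone hij) hzj.1)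

end Shells

theorem Pairwise.injective_of_disjoint {ι α : Type*} {E : ι → Set α}
    (hd : Pairwise (Disjoint on E)) (hE : ∀ i, (E i).Nonempty) : Injective E := fun i j h => by
  by_contra hne
  exact (hE i).ne_empty (disjoint_self.1 ((hd hne).mono_right h.le))

theorem Set.Countable.mk_eq_aleph0 {α : Type*} {s : Set α} (hc : s.Countable) (hi : s.Infinite) :
    Cardinal.mk s = Cardinal.aleph0 :=
  have : Countable s := hc.to_subtype
  have : Infinite s := hi.to_subtype
  Cardinal.mk_eq_aleph0 s

theorem exists_stronglyDiscrete_subset_of_mem_closure [T1Space X]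
    (hacc : ∀ D : Set X, D.Countable → D.Infinite → StronglyDiscrete D →
      ∃ x, x ∈ closure (D \ {x}))
    {U : Set X} {y : X} (hyU : y ∈ closure U) {V : ℕ → Set X}
    (hV : ∀ n, IsOpen (V n) ∧ y ∈ V n) (hVanti : Antitone V) (hVy : ⋂ n, closure (V n) = {y}) :
    ∃ E ⊆ U, StronglyDiscrete E ∧ E.Countable ∧ y ∈ closure E := by
  by_cases hyU' : y ∈ U
  · exact ⟨{y}, singleton_subset_iff.2 hyU', stronglyDiscrete_singleton y,
      countable_singleton y, subset_closure rfl⟩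
  have hUV : ∀ n, (U ∩ V n).Nonempty := fun n =>
    inter_comm U _ ▸ mem_closure_iff.1 hyU _ (hV n).1 (hV n).2
  obtain ⟨n, x, hn, hx⟩ := exists_seq_mem_shells hVanti hUV hVy hyU'
  have hshells := pairwise_disjoint_shells hVanti hn
  have hinj : Injective x := fun i j hij => by
    by_contra hne
    exact (hshells hne).ne_of_mem (hx i).2 (hx j).2 hij
  have hsd : StronglyDiscrete (range x) :=
    stronglyDiscrete_range (fun k => (hV _).1.sdiff isClosed_closure) (fun k => (hx k).2) hshells
  obtain ⟨z, hz⟩ := hacc _ (countable_range x) (infinite_range_of_injective hinj) hsd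
  have hxV : ∀ m, ∀ᶠ k in atTop, x k ∈ V m := fun m =>
    eventually_atTop.2 ⟨m, fun k hk => hVanti (hk.trans hn.le_apply) (hx k).2.1⟩
  have hzy : z = y := by
    simpa only [hVy, mem_singleton_iff] using mem_iInter_closure_of_mem_closure_range_diff hxV hz
  subst hzy
  exact ⟨range x, range_subset_iff.2 fun k => (hx k).1, hsd, countable_range x,
    closure_mono sdiff_subset hz⟩

end

theorem stmt4 {X : Type*} [TopologicalSpace X] [T2Space X]
    (hacc : ∀ D : Set X, D.Countable → D.Infinite → StronglyDiscrete D →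
      ∃ x, x ∈ closure (D \ {x}))
    {Y : Set X} (hYc : Y.Countable) (hYi : Y.Infinite) (hYf : Fluffy Y)
    (hpsi : ∀ y ∈ Y, ∃ V : ℕ → Set X, (∀ n, IsOpen (V n) ∧ y ∈ V n) ∧
      (∀ n, V (n + 1) ⊆ V n) ∧ ⋂ n, closure (V n) = {y}) :
    ∃ D : Set X, StronglyDiscrete D ∧ Cardinal.mk D = Cardinal.mk Y ∧ Y ⊆ closure D := by
  obtain ⟨U, hU, hUd⟩ := hYf
  have hUd' : Pairwise (Disjoint on fun y : Y => U y) := fun y y' h =>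
    hUd y.2 y'.2 (Subtype.coe_ne_coe.2 h)
  have hE : ∀ y : Y, ∃ E ⊆ U y, StronglyDiscrete E ∧ E.Countable ∧ (y : X) ∈ closure E := by
    rintro ⟨y, hy⟩
    obtain ⟨V, hV, hVsucc, hVy⟩ := hpsi y hy
    exact exists_stronglyDiscrete_subset_of_mem_closure hacc (hU y hy).2.2 hV
      (antitone_nat_of_succ_le hVsucc) hVy
  choose E hEU hEsd hEc hEy using hE
  have : Countable Y := hYc.to_subtype
  have : Infinite Y := hYi.to_subtype
  have hEinj : Injective E := Pairwise.injective_of_disjoint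
    (fun y y' h => (hUd' h).mono (hEU y) (hEU y')) fun y => closure_nonempty_iff.1 ⟨_, hEy y⟩
  have hDi : (⋃ y, E y).Infinite := infinite_iUnion hEinj
  refine ⟨⋃ y, E y, StronglyDiscrete.iUnion hEsd (fun y => (hU y y.2).1) hEU hUd', ?_,
    fun y hy => closure_mono (subset_iUnion E ⟨y, hy⟩) (hEy ⟨y, hy⟩)⟩
  rw [(countable_iUnion hEc).mk_eq_aleph0 hDi, hYc.mk_eq_aleph0 hYi]
end

section
/- Let X be a Hausdorff space such that every point x ∈ X admits a countable family of open neighborhoods whose closures intersect exactly in {x}, and assume that the closure of every countable strongly discrete subset of X is countably compact. Then X is regular (T3). -/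
open Set

def CountablyCompactSet {X : Type*} [TopologicalSpace X] (s : Set X) : Prop :=
  ∀ U : ℕ → Set X, (∀ n, IsOpen (U n)) → s ⊆ ⋃ n, U n → ∃ t : Finset ℕ, s ⊆ ⋃ n ∈ t, U n

section Aux

variable {X : Type*} [TopologicalSpace X]

/-- closure of the range of a sequence whose tails lie in `T k`. -/
lemma lemB [T1Space X] (d : ℕ → X) (T : ℕ → Set X) (h : ∀ k j, k ≤ j → d j ∈ T k) :
    closure (Set.range d) ⊆ Set.range d ∪ ⋂ k, closure (T k) := by
  intro w hw
  by_cases hwD : w ∈ Set.range d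
  · exact Or.inl hwD
  · refine Or.inr (Set.mem_iInter.2 fun k => ?_)
    have hsplit : Set.range d ⊆ (d '' Set.Iio k) ∪ T k := by
      rintro _ ⟨j, rfl⟩
      rcases lt_or_ge j k with hj | hj
      · exact Or.inl ⟨j, hj, rfl⟩
      · exact Or.inr (h k j hj)
    have h2 := closure_mono hsplit hw
    rw [closure_union] at h2
    rcases h2 with h2 | h2
    · rw [((Set.finite_Iio k).image d).isClosed.closure_eq] at h2
      exact absurd (Set.image_subset_range d _ h2) hwD
    · exact h2

/-- Points chosen from a pairwise disjoint family of open sets form a strongly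
discrete set. -/
lemma lemSD {ι : Type*} [Nonempty ι] (A : ι → Set X) (d : ι → X)
    (hAo : ∀ i, IsOpen (A i)) (hd : ∀ i, d i ∈ A i)
    (hdis : ∀ i j, i ≠ j → Disjoint (A i) (A j)) :
    StronglyDiscrete (Set.range d) := by
  have hinj : Function.Injective d := by
    intro i j hij
    by_contra hne
    exact Set.disjoint_left.1 (hdis i j hne) (hd i) (by rw [hij]; exact hd j)
  refine ⟨fun w => A (Function.invFun d w), ?_, ?_⟩
  · rintro _ ⟨i, rfl⟩
    show IsOpen (A (Function.invFun d (d i))) ∧ d i ∈ A (Function.invFun d (d i))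
    rw [Function.leftInverse_invFun hinj i]
    exact ⟨hAo i, hd i⟩
  · rintro _ ⟨i, rfl⟩ _ ⟨j, rfl⟩ hne
    have hij : i ≠ j := fun h => hne (by rw [h])
    show Disjoint (A (Function.invFun d (d i))) (A (Function.invFun d (d j)))
    rw [Function.leftInverse_invFun hinj i, Function.leftInverse_invFun hinj j]
    exact hdis i j hij

/-- Key lemma: an antitone "closed pseudocharacter" family at `p` is in fact a
neighbourhood base at `p`. -/
lemma lemA [T2Space X]
    (hsd : ∀ D : Set X, D.Countable → StronglyDiscrete D → CountablyCompactSet (closure D))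
    (p : X) (B : ℕ → Set X) (hBo : ∀ n, IsOpen (B n)) (hBp : ∀ n, p ∈ B n)
    (hBa : Antitone B) (hBe : ∀ w, w ≠ p → ∃ k, w ∉ closure (B k))
    {G : Set X} (hGo : IsOpen G) (hpG : p ∈ G) : ∃ n, B n ⊆ G := by
  by_contra hno
  push_neg at hno
  haveI : Nonempty X := ⟨p⟩
  have hstep : ∀ j : ℕ, ∃ c : ℕ × X, c.2 ∈ B j ∧ c.2 ∉ closure (B c.1) ∧ c.2 ∉ G := by
    intro j
    by_contra hc
    push_neg at hc
    refine hno j ?_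
    intro u hu
    rcases eq_or_ne u p with rfl | hup
    · exact hpG
    · obtain ⟨k, hk⟩ := hBe u hup
      exact hc (k, u) hu hk
  choose c hc1 hc2 hc3 using hstep
  let M : ℕ → ℕ := fun n => Nat.rec 0 (fun _ ih => max (c ih).1 (ih + 1)) n
  have hMsucc : ∀ n, M (n + 1) = max (c (M n)).1 (M n + 1) := fun _ => rfl
  have hMmono : StrictMono M := by
    refine strictMono_nat_of_lt_succ fun n => ?_
    rw [hMsucc n]
    exact lt_of_lt_of_le (Nat.lt_succ_self _) (le_max_right _ _)
  let d : ℕ → X := fun k => (c (M k)).2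
  have hd1 : ∀ k, d k ∈ B (M k) := fun k => hc1 (M k)
  have hd2 : ∀ k, d k ∉ closure (B (M (k + 1))) := by
    intro k hcl
    refine hc2 (M k) (closure_mono (hBa ?_) hcl)
    rw [hMsucc k]; exact le_max_left _ _
  have hd3 : ∀ k, d k ∉ G := fun k => hc3 (M k)
  let A : ℕ → Set X := fun k => B (M k) \ closure (B (M (k + 1)))
  have hAo : ∀ k, IsOpen (A k) := fun k => (hBo _).sdiff isClosed_closure
  have hdA : ∀ k, d k ∈ A k := fun k => ⟨hd1 k, hd2 k⟩
  have hkey : ∀ k l, k < l → Disjoint (A k) (A l) := by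
    intro k l hkl
    rw [Set.disjoint_left]
    intro a ha hal
    exact ha.2 (subset_closure (hBa (hMmono.monotone (Nat.succ_le_of_lt hkl)) hal.1))
  have hdis : ∀ k l, k ≠ l → Disjoint (A k) (A l) := by
    intro k l hkl
    rcases lt_or_gt_of_ne hkl with h | h
    · exact hkey k l h
    · exact (hkey l k h).symm
  have hCC := hsd _ (Set.countable_range d) (lemSD A d hAo hdA hdis)
  have hCo : ∀ k : ℕ, IsOpen (Nat.casesOn k G A : Set X) := by
    rintro (_ | k)
    · exact hGo
    · exact hAo k
  have hsubDP : closure (Set.range d) ⊆ Set.range d ∪ {p} := by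
    have hB : ∀ k j, k ≤ j → d j ∈ B (M k) := fun k j hkj =>
      hBa (hMmono.monotone hkj) (hd1 j)
    refine (lemB d (fun k => B (M k)) hB).trans (Set.union_subset_union_right _ ?_)
    intro u hu
    rcases eq_or_ne u p with rfl | hup
    · exact Set.mem_singleton _
    · obtain ⟨k, hk⟩ := hBe u hup
      exact absurd (closure_mono (hBa hMmono.le_apply) (Set.mem_iInter.1 hu k)) hk
  have hcov : closure (Set.range d) ⊆ ⋃ k, (Nat.casesOn k G A : Set X) := by
    intro w hw
    rcases hsubDP hw with ⟨k, rfl⟩ | hp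
    · exact Set.mem_iUnion.2 ⟨k + 1, hdA k⟩
    · rw [Set.mem_singleton_iff] at hp
      subst hp
      exact Set.mem_iUnion.2 ⟨0, hpG⟩
  obtain ⟨t, ht⟩ := hCC _ hCo hcov
  have hdt := ht (subset_closure (Set.mem_range_self (t.sup id + 1)))
  rw [Set.mem_iUnion₂] at hdt
  obtain ⟨k, hkt, hdk⟩ := hdt
  rcases k with _ | n
  · exact hd3 (t.sup id + 1) hdk
  · have hn : n ≠ t.sup id + 1 := by
      have := Finset.le_sup (f := id) hkt
      simp only [id] at this
      omega
    exact Set.disjoint_left.1 (hdis n (t.sup id + 1) hn) hdk (hdA (t.sup id + 1))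

end Aux

theorem stmt6 {X : Type*} [TopologicalSpace X] [T2Space X]
    (hpsi : ∀ x : X, ∃ V : ℕ → Set X, (∀ n, IsOpen (V n) ∧ x ∈ V n) ∧
      ⋂ n, closure (V n) = {x})
    (hsd : ∀ D : Set X, D.Countable → StronglyDiscrete D → CountablyCompactSet (closure D)) :
    RegularSpace X := by
  classical
  -- antitone pseudocharacter families at every point
  have hpsi' : ∀ p : X, ∃ B : ℕ → Set X, (∀ n, IsOpen (B n)) ∧ (∀ n, p ∈ B n) ∧
      Antitone B ∧ (∀ w, w ≠ p → ∃ k, w ∉ closure (B k)) := by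
    intro p
    obtain ⟨Wp, hW1, hW2⟩ := hpsi p
    refine ⟨fun n => ⋂ k ∈ Set.Iic n, Wp k, ?_, ?_, ?_, ?_⟩
    · exact fun n => (Set.finite_Iic n).isOpen_biInter fun k _ => (hW1 k).1
    · exact fun n => Set.mem_iInter₂.2 fun k _ => (hW1 k).2
    · intro a b hab
      exact Set.biInter_subset_biInter_left (Set.Iic_subset_Iic.2 hab)
    · intro w hwp
      have hw : w ∉ ⋂ n, closure (Wp n) := by
        rw [hW2]; simpa using hwp
      rw [Set.mem_iInter] at hw
      push_neg at hw
      obtain ⟨k, hk⟩ := hw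
      exact ⟨k, fun hc =>
        hk (closure_mono (Set.biInter_subset_of_mem (Set.mem_Iic.2 le_rfl)) hc)⟩
  choose Wb hWo hWp hWa hWe using hpsi'
  -- every such family is a neighbourhood base
  have hbase : ∀ (p : X) (G : Set X), IsOpen G → p ∈ G → ∃ n, Wb p n ⊆ G :=
    fun p G hGo hpG => lemA hsd p (Wb p) (hWo p) (hWp p) (hWa p) (hWe p) hGo hpG
  refine RegularSpace.of_exists_mem_nhds_isClosed_subset ?_
  intro x s hs
  obtain ⟨O, hOs, hOo, hxO⟩ := mem_nhds_iff.1 hs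
  obtain ⟨V, hVo, hVx, hVa, hVO, hVe⟩ :
      ∃ V : ℕ → Set X, (∀ n, IsOpen (V n)) ∧ (∀ n, x ∈ V n) ∧ Antitone V ∧
        (∀ n, V n ⊆ O) ∧ (∀ w, w ≠ x → ∃ k, w ∉ closure (V k)) := by
    refine ⟨fun n => O ∩ Wb x n, fun n => hOo.inter (hWo x n),
      fun n => ⟨hxO, hWp x n⟩, fun a b hab => Set.inter_subset_inter_right _ (hWa x hab),
      fun n => Set.inter_subset_left, fun w hw => ?_⟩
    obtain ⟨k, hk⟩ := hWe x w hw
    exact ⟨k, fun hc => hk (closure_mono Set.inter_subset_right hc)⟩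
  suffices key : ∃ n, closure (V n) ⊆ O by
    obtain ⟨n, hn⟩ := key
    exact ⟨closure (V n), Filter.mem_of_superset ((hVo n).mem_nhds (hVx n)) subset_closure,
      isClosed_closure, hn.trans hOs⟩
  by_contra hbad
  push_neg at hbad
  -- choose boundary points
  have hsel : ∀ n : ℕ, ∃ y, y ∈ closure (V n) ∧ y ∉ O := fun n => Set.not_subset.1 (hbad n)
  choose sel hsel1 hsel2 using hsel
  have hstep : ∀ j : ℕ, ∃ k, j < k ∧ sel j ∉ closure (V k) := by
    intro j
    have hx' : sel j ≠ x := fun h => hsel2 j (h ▸ hxO)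
    obtain ⟨k0, hk0⟩ := hVe (sel j) hx'
    exact ⟨max k0 (j + 1), lt_of_lt_of_le (Nat.lt_succ_self j) (le_max_right _ _),
      fun hc => hk0 (closure_mono (hVa (le_max_left _ _)) hc)⟩
  choose stp hstp1 hstp2 using hstep
  let M : ℕ → ℕ := fun n => Nat.rec 0 (fun _ ih => stp ih) n
  have hMmono : StrictMono M := strictMono_nat_of_lt_succ fun n => hstp1 (M n)
  let z : ℕ → X := fun n => sel (M n)
  have hz1 : ∀ n, z n ∈ closure (V (M n)) := fun n => hsel1 (M n)
  have hz2 : ∀ n, z n ∉ O := fun n => hsel2 (M n)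
  have hz3 : ∀ n, z n ∉ closure (V (M (n + 1))) := fun n => hstp2 (M n)
  -- bubbles at the boundary points
  have hGt : ∀ n, ∃ j, Wb (z n) j ⊆ (closure (V (M (n + 1))))ᶜ :=
    fun n => hbase (z n) _ isClosed_closure.isOpen_compl (hz3 n)
  choose jst hjst using hGt
  let Bb : ℕ → ℕ → Set X := fun n j => Wb (z n) (jst n + j)
  have hBbo : ∀ n j, IsOpen (Bb n j) := fun n j => hWo _ _
  have hBbz : ∀ n j, z n ∈ Bb n j := fun n j => hWp _ _
  have hBba : ∀ n, Antitone (Bb n) := fun n a b hab => hWa _ (by omega)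
  have hBbG : ∀ n j, Bb n j ⊆ (closure (V (M (n + 1))))ᶜ :=
    fun n j => (hWa _ (Nat.le_add_right _ _)).trans (hjst n)
  have hBbe : ∀ n w, w ≠ z n → ∃ k, w ∉ closure (Bb n k) := by
    intro n w hw
    obtain ⟨k, hk⟩ := hWe (z n) w hw
    exact ⟨k, fun hc => hk (closure_mono (hWa _ (Nat.le_add_left _ _)) hc)⟩
  have hBbbase : ∀ n (o : Set X), IsOpen o → z n ∈ o → ∃ j, Bb n j ⊆ o := by
    intro n o ho hzo
    obtain ⟨j, hj⟩ := hbase (z n) o ho hzo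
    exact ⟨j, (hWa _ (Nat.le_add_left _ _)).trans hj⟩
  -- points of columns
  have hptex : ∀ n j, ∃ u, u ∈ V (M n) ∧ u ∈ Bb n j := by
    intro n j
    obtain ⟨u, hu1, hu2⟩ := mem_closure_iff.1 (hz1 n) (Bb n j) (hBbo n j) (hBbz n j)
    exact ⟨u, hu2, hu1⟩
  choose pt hpt1 hpt2 using hptex
  have hptz : ∀ n j, pt n j ≠ z n := fun n j h => hz2 n (h ▸ hVO (M n) (hpt1 n j))
  have hstep2 : ∀ n j, ∃ k, j < k ∧ pt n j ∉ closure (Bb n k) := by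
    intro n j
    obtain ⟨k0, hk0⟩ := hBbe n (pt n j) (hptz n j)
    exact ⟨max k0 (j + 1), lt_of_lt_of_le (Nat.lt_succ_self j) (le_max_right _ _),
      fun hc => hk0 (closure_mono (hBba n (le_max_left _ _)) hc)⟩
  choose stq hstq1 hstq2 using hstep2
  let q : ℕ → ℕ → ℕ := fun n i => Nat.rec 0 (fun _ ih => stq n ih) i
  have hqmono : ∀ n, StrictMono (q n) :=
    fun n => strictMono_nat_of_lt_succ fun i => hstq1 n (q n i)
  let sp : ℕ → ℕ → X := fun n i => pt n (q n i)
  have hs1 : ∀ n i, sp n i ∈ V (M n) := fun n i => hpt1 n (q n i)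
  have hs2 : ∀ n i, sp n i ∈ Bb n (q n i) := fun n i => hpt2 n (q n i)
  have hs3 : ∀ n i, sp n i ∉ closure (Bb n (q n (i + 1))) := fun n i => hstq2 n (q n i)
  -- the strongly discrete set
  let R : ℕ × ℕ → Set X := fun pr =>
    (V (M pr.1) ∩ Bb pr.1 (q pr.1 pr.2)) \ closure (Bb pr.1 (q pr.1 (pr.2 + 1)))
  have hRo : ∀ pr, IsOpen (R pr) := fun pr => ((hVo _).inter (hBbo _ _)).sdiff isClosed_closure
  let Sp : ℕ × ℕ → X := fun pr => sp pr.1 pr.2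
  have hSR : ∀ pr, Sp pr ∈ R pr := fun pr => ⟨⟨hs1 _ _, hs2 _ _⟩, hs3 _ _⟩
  have hsame : ∀ n i i', i < i' → Disjoint (R (n, i)) (R (n, i')) := by
    intro n i i' hii
    rw [Set.disjoint_left]
    intro a ha ha'
    exact ha.2 (subset_closure (hBba n ((hqmono n).monotone (Nat.succ_le_of_lt hii)) ha'.1.2))
  have hcross : ∀ n i n' i', n < n' → Disjoint (R (n, i)) (R (n', i')) := by
    intro n i n' i' hnn
    rw [Set.disjoint_left]
    intro a ha ha'
    exact hBbG n (q n i) ha.1.2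
      (subset_closure (hVa (hMmono.monotone (Nat.succ_le_of_lt hnn)) ha'.1.1))
  have hRdis : ∀ pr pr' : ℕ × ℕ, pr ≠ pr' → Disjoint (R pr) (R pr') := by
    rintro ⟨n, i⟩ ⟨n', i'⟩ hne
    rcases Nat.lt_trichotomy n n' with h | h | h
    · exact hcross n i n' i' h
    · subst h
      have hii : i ≠ i' := fun h => hne (by rw [h])
      rcases lt_or_gt_of_ne hii with h' | h'
      · exact hsame n i i' h'
      · exact (hsame n i' i h').symm
    · exact (hcross n' i' n i h).symm
  haveI : Nonempty X := ⟨x⟩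
  have hCC := hsd _ (Set.countable_range Sp) (lemSD R Sp hRo hSR hRdis)
  have hCo : ∀ k : ℕ, IsOpen (Nat.casesOn k O (fun n => Bb n 0) : Set X) := by
    rintro (_ | n)
    · exact hOo
    · exact hBbo n 0
  have hcov : closure (Set.range Sp) ⊆ ⋃ k, (Nat.casesOn k O (fun n => Bb n 0) : Set X) := by
    intro w hw
    by_cases hwD : w ∈ Set.range Sp
    · obtain ⟨⟨n, i⟩, rfl⟩ := hwD
      exact Set.mem_iUnion.2 ⟨0, hVO (M n) (hs1 n i)⟩
    by_cases hwx : w = x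
    · exact Set.mem_iUnion.2 ⟨0, hwx ▸ hxO⟩
    obtain ⟨K, hK⟩ := hVe w hwx
    have hKM : w ∉ closure (V (M K)) := fun hc => hK (closure_mono (hVa hMmono.le_apply) hc)
    have hsplit : Set.range Sp ⊆ (⋃ n ∈ Set.Iio K, Set.range (fun i => sp n i)) ∪ V (M K) := by
      rintro _ ⟨⟨n, i⟩, rfl⟩
      rcases lt_or_ge n K with hn | hn
      · exact Or.inl (Set.mem_iUnion₂.2 ⟨n, hn, ⟨i, rfl⟩⟩)
      · exact Or.inr (hVa (hMmono.monotone hn) (hs1 n i))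
    have h2 := closure_mono hsplit hw
    rw [closure_union] at h2
    rcases h2 with h2 | h2
    swap
    · exact absurd h2 hKM
    rw [(Set.finite_Iio K).closure_biUnion] at h2
    obtain ⟨n, hnK, hwn⟩ := Set.mem_iUnion₂.1 h2
    have hB : ∀ k j, k ≤ j → sp n j ∈ Bb n (q n k) :=
      fun k j hkj => hBba n ((hqmono n).monotone hkj) (hs2 n j)
    rcases lemB (fun i => sp n i) (fun k => Bb n (q n k)) hB hwn with hr | hr
    · obtain ⟨i, hi⟩ := hr
      exact absurd ⟨(n, i), hi⟩ hwD
    · have hwz : w = z n := by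
        by_contra hwzn
        obtain ⟨k0, hk0⟩ := hBbe n w hwzn
        exact hk0 (closure_mono (hBba n (hqmono n).le_apply) (Set.mem_iInter.1 hr k0))
      exact Set.mem_iUnion.2 ⟨n + 1, hwz ▸ hBbz n 0⟩
  obtain ⟨t, ht⟩ := hCC _ hCo hcov
  have hzN : z (t.sup id + 1) ∈ closure (Set.range Sp) := by
    rw [mem_closure_iff]
    intro o ho hzo
    obtain ⟨j, hj⟩ := hBbbase (t.sup id + 1) o ho hzo
    refine ⟨Sp (t.sup id + 1, j), ?_, ⟨(t.sup id + 1, j), rfl⟩⟩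
    show sp (t.sup id + 1) j ∈ o
    exact hj (hBba (t.sup id + 1) ((hqmono (t.sup id + 1)).le_apply) (hs2 (t.sup id + 1) j))
  have hmem := ht hzN
  rw [Set.mem_iUnion₂] at hmem
  obtain ⟨k, hkt, hzk⟩ := hmem
  rcases k with _ | n
  · exact hz2 (t.sup id + 1) hzk
  · have hnN : n + 1 ≤ t.sup id := by
      have := Finset.le_sup (f := id) hkt
      simpa using this
    have hle' : n + 1 ≤ t.sup id + 1 := by omega
    have hle : M (n + 1) ≤ M (t.sup id + 1) := hMmono.monotone hle'
    have hcl : z (t.sup id + 1) ∈ closure (V (M (n + 1))) :=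
      closure_mono (hVa hle) (hz1 (t.sup id + 1))
    exact hBbG n 0 hzk hcl
end

section
/- In a countably compact regular (T3) space, every point of countable pseudocharacter has a countable neighborhood base (countable character). -/
open Set

theorem stmt7 {X : Type*} [TopologicalSpace X] [T2Space X] [RegularSpace X]
    (hcc : CountablyCompactSet (univ : Set X)) {p : X}
    (hpsi : ∃ V : ℕ → Set X, (∀ n, IsOpen (V n)) ∧ ⋂ n, V n = {p}) :
    (nhds p).IsCountablyGenerated := by
  obtain ⟨V, hVopen, hVinter⟩ := hpsi
  have hpV : ∀ n, V n ∈ nhds p := fun n => (hVopen n).mem_nhds (by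
    have hp : p ∈ ⋂ n, V n := by rw [hVinter]; exact rfl
    exact mem_iInter.mp hp n)
  choose C hCmem hCclosed hCsub using fun n => exists_mem_nhds_isClosed_subset (hpV n)
  set B : ℕ → Set X := fun n => ⋂ k ∈ Finset.range (n + 1), C k with hBdef
  have hBmem : ∀ n, B n ∈ nhds p := fun n =>
    (Filter.biInter_finset_mem _).mpr fun k _ => hCmem k
  have hBclosed : ∀ n, IsClosed (B n) := fun n =>
    isClosed_biInter fun k _ => hCclosed k
  have hBanti : ∀ m n, m ≤ n → B n ⊆ B m := by
    intro m n hmn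
    intro x hx
    exact mem_iInter₂.mpr fun k hk => mem_iInter₂.mp hx k
      (Finset.mem_range.mpr (lt_of_lt_of_le (Finset.mem_range.mp hk) (by omega)))
  have hBsubV : ∀ n, B n ⊆ V n := fun n =>
    (biInter_subset_of_mem (by simp : n ∈ Finset.range (n + 1))).trans (hCsub n)
  have hbasis : (nhds p).HasBasis (fun _ : ℕ => True) B := by
    constructor
    intro s
    constructor
    · intro hs
      obtain ⟨U, hUs, hUopen, hpU⟩ := mem_nhds_iff.mp hs
      by_contra hcon
      push_neg at hcon
      have hx : ∀ n, ∃ x, x ∈ B n ∧ x ∉ U := by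
        intro n
        have hns : ¬ B n ⊆ s := by simpa using hcon n
        have : ¬ B n ⊆ U := fun h => hns (h.trans hUs)
        exact not_subset.mp this
      -- countable compactness on the cover (B n)ᶜ ∪ U
      have hcover : (univ : Set X) ⊆ ⋃ n, ((B n)ᶜ ∪ U) := by
        intro x _
        rcases Classical.em (x = p) with rfl | hxp
        · exact mem_iUnion.mpr ⟨0, Or.inr hpU⟩
        · have : x ∉ ⋂ n, V n := by rw [hVinter]; exact hxp
          obtain ⟨n, hn⟩ := not_forall.mp (by simpa [mem_iInter] using this)
          exact mem_iUnion.mpr ⟨n, Or.inl (fun hB => hn (hBsubV n hB))⟩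
      obtain ⟨t, ht⟩ := hcc _ (fun n => (hBclosed n).isOpen_compl.union hUopen) hcover
      set N := t.sup id with hN
      obtain ⟨x, hxB, hxU⟩ := hx N
      obtain ⟨n, hnt, hxn⟩ := mem_iUnion₂.mp (ht (mem_univ x))
      rcases hxn with h | h
      · exact h (hBanti n N (Finset.le_sup (f := id) hnt) hxB)
      · exact hxU h
    · rintro ⟨n, -, hns⟩
      exact Filter.mem_of_superset (hBmem n) hns
  exact hbasis.isCountablyGenerated
end

section
/- Every first countable cellular-compact Hausdorff space is regular (T3). -/
open Set Filter Topology

def CellularCompact (X : Type*) [TopologicalSpace X] : Prop :=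
  ∀ 𝒰 : Set (Set X), (∀ u ∈ 𝒰, IsOpen u ∧ u.Nonempty) → 𝒰.PairwiseDisjoint id →
    ∃ K : Set X, IsCompact K ∧ ∀ u ∈ 𝒰, (K ∩ u).Nonempty

lemma inner_lemma {X : Type*} [TopologicalSpace X] [T2Space X]
    (z : X) (G : Set X) (hG : IsOpen G) (hz : z ∈ closure G)
    (W : ℕ → Set X) (hWmem : ∀ i, W i ∈ 𝓝 z) :
    ∃ H : ℕ → Set X, (∀ i, IsOpen (H i) ∧ (H i).Nonempty ∧ H i ⊆ G ∧ H i ⊆ W i) ∧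
      (∀ i j, i ≠ j → H i = H j ∨ Disjoint (H i) (H j)) := by
  by_cases hone : ∃ V : Set X, IsOpen V ∧ z ∈ V ∧ V ∩ G ⊆ {z}
  · obtain ⟨V, hVo, hzV, hVG⟩ := hone
    obtain ⟨p, hp⟩ := (mem_closure_iff.mp hz) V hVo hzV
    have hpz : p = z := hVG hp
    subst hpz
    refine ⟨fun _ => {p}, fun i => ⟨?_, ⟨p, rfl⟩, singleton_subset_iff.2 hp.2,
      singleton_subset_iff.2 (mem_of_mem_nhds (hWmem i))⟩, fun i j _ => Or.inl rfl⟩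
    have : {p} = V ∩ G := Subset.antisymm (singleton_subset_iff.2 hp) hVG
    rw [this]; exact hVo.inter hG
  · push_neg at hone
    have key : ∀ N : Set X, IsOpen N → z ∈ N →
        ∃ h d : Set X, IsOpen h ∧ h.Nonempty ∧ h ⊆ N ∩ G ∧ IsOpen d ∧ z ∈ d ∧
          Disjoint h d := by
      intro N hNo hzN
      have h' := hone N hNo hzN
      rw [not_subset] at h'
      obtain ⟨p, hpNG, hpz⟩ := h'
      simp only [mem_singleton_iff] at hpz
      obtain ⟨A, D, hAo, hDo, hpA, hzD, hAD⟩ := t2_separation hpz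
      exact ⟨A ∩ (N ∩ G), D, hAo.inter (hNo.inter hG), ⟨p, hpA, hpNG⟩,
        inter_subset_right, hDo, hzD, hAD.mono_left inter_subset_left⟩
    choose h1 h2 hopen hne hsub hDo hzD hdisj using key
    let E : ℕ → {N : Set X // IsOpen N ∧ z ∈ N} := fun n =>
      Nat.rec ⟨Set.univ, isOpen_univ, mem_univ z⟩
        (fun i Ei =>
          ⟨Ei.1 ∩ h2 (interior (W i) ∩ Ei.1) (isOpen_interior.inter Ei.2.1)
              ⟨mem_interior_iff_mem_nhds.2 (hWmem i), Ei.2.2⟩,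
           Ei.2.1.inter (hDo _ _ _), Ei.2.2, hzD _ _ _⟩) n
    let Harg : ℕ → Set X := fun i => interior (W i) ∩ (E i).1
    have hHargo : ∀ i, IsOpen (Harg i) := fun i => isOpen_interior.inter (E i).2.1
    have hHargz : ∀ i, z ∈ Harg i :=
      fun i => ⟨mem_interior_iff_mem_nhds.2 (hWmem i), (E i).2.2⟩
    let H : ℕ → Set X := fun i => h1 (Harg i) (hHargo i) (hHargz i)
    let D : ℕ → Set X := fun i => h2 (Harg i) (hHargo i) (hHargz i)
    have hEsucc : ∀ i, (E (i+1)).1 = (E i).1 ∩ D i := fun i => rfl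
    have hEanti : Antitone fun i => (E i).1 := by
      apply antitone_nat_of_succ_le
      intro i
      rw [hEsucc i]
      exact inter_subset_left
    have hHsub : ∀ i, H i ⊆ Harg i ∩ G := fun i => hsub _ _ _
    have aux : ∀ i j, i < j → Disjoint (H i) (H j) := by
      intro i j hij
      have hje : H j ⊆ (E j).1 :=
        (hHsub j).trans (inter_subset_left.trans inter_subset_right)
      have h1j : H j ⊆ D i := by
        have h3 : (E j).1 ⊆ (E (i+1)).1 := hEanti hij
        rw [hEsucc i] at h3
        exact hje.trans (h3.trans inter_subset_right)
      exact (hdisj _ _ _).mono_right h1j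
    refine ⟨H, fun i => ⟨hopen _ _ _, hne _ _ _, (hHsub i).trans inter_subset_right,
      ((hHsub i).trans inter_subset_left).trans
        (inter_subset_left.trans interior_subset)⟩, ?_⟩
    intro i j hij
    rcases hij.lt_or_gt with h | h
    · exact Or.inr (aux i j h)
    · exact Or.inr (aux j i h).symm

lemma clusterPt_mem_closure {X : Type*} [TopologicalSpace X] {y : X} {f : Filter X}
    (h : ClusterPt y f) {s : Set X} (hs : s ∈ f) : y ∈ closure s :=
  mem_closure_iff_clusterPt.2 (h.mono (le_principal_iff.2 hs))

theorem stmt8 {X : Type*} [TopologicalSpace X] [T2Space X] [FirstCountableTopology X]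
    (hcc : CellularCompact X) : RegularSpace X := by
  apply RegularSpace.of_exists_mem_nhds_isClosed_subset
  intro x s hs
  by_contra hcon
  push_neg at hcon
  set U := interior s with hUdef
  have hUopen : IsOpen U := isOpen_interior
  have hxU : x ∈ U := mem_interior_iff_mem_nhds.2 hs
  have hnc : ∀ t ∈ 𝓝 x, ¬ closure t ⊆ U := by
    intro t ht h
    exact hcon (closure t) (mem_of_superset ht subset_closure) isClosed_closure
      (h.trans interior_subset)
  obtain ⟨B, hB⟩ := (𝓝 x).exists_antitone_basis
  set C : ℕ → Set X := fun n => interior (B n) with hCdef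
  have hCopen : ∀ n, IsOpen (C n) := fun n => isOpen_interior
  have hCmem : ∀ n, C n ∈ 𝓝 x := fun n =>
    interior_mem_nhds.2 (hB.toHasBasis.mem_of_mem trivial)
  have hxC : ∀ n, x ∈ C n := fun n => mem_of_mem_nhds (hCmem n)
  have hCanti : Antitone C := fun i j hij => interior_mono (hB.antitone hij)
  have hCbasis : ∀ t ∈ 𝓝 x, ∃ n, C n ⊆ t := by
    intro t ht
    obtain ⟨n, -, hn⟩ := hB.toHasBasis.mem_iff.mp ht
    exact ⟨n, interior_subset.trans hn⟩
  -- L1 : any point in all closures of the C n's equals x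
  have L1 : ∀ y : X, y ≠ x → ∃ m, y ∉ closure (C m) := by
    intro y hyx
    by_contra hy
    push_neg at hy
    have hnb : NeBot (𝓝 x ⊓ 𝓝 y) := by
      rw [inf_neBot_iff]
      intro t ht u hu
      obtain ⟨m, hm⟩ := hCbasis t ht
      obtain ⟨q, hq⟩ := mem_closure_iff_nhds.mp (hy m) u hu
      exact ⟨q, hm hq.2, hq.1⟩
    exact hyx (t2_iff_nhds.mp inferInstance hnb).symm
  -- step of the outer recursion
  have hnext : ∀ (n : ℕ) (z : X), z ∉ U → ∃ (n' : ℕ) (z' : X), n < n' ∧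
      z ∉ closure (C n') ∧ z' ∈ closure (C n') ∧ z' ∉ U := by
    intro n z hzU
    have hzx : z ≠ x := fun h => hzU (h ▸ hxU)
    obtain ⟨m, hm⟩ := L1 z hzx
    refine ⟨max (n+1) m, ?_⟩
    have hcl : closure (C (max (n+1) m)) ⊆ closure (C m) :=
      closure_mono (hCanti (le_max_right _ _))
    have hns : ¬ closure (C (max (n+1) m)) ⊆ U := hnc _ (hCmem _)
    rw [not_subset] at hns
    obtain ⟨z', hz'c, hz'U⟩ := hns
    exact ⟨z', lt_of_lt_of_le (Nat.lt_succ_self n) (le_max_left _ _),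
      fun h => hm (hcl h), hz'c, hz'U⟩
  choose fn fz hlt hnotin hzc hzU' using hnext
  -- initial point
  have hns0 : ¬ closure (C 0) ⊆ U := hnc _ (hCmem 0)
  rw [not_subset] at hns0
  obtain ⟨z0, hz0c, hz0U⟩ := hns0
  let seq : ℕ → ℕ × {w : X // w ∉ U} := fun k =>
    Nat.rec (⟨0, z0, hz0U⟩ : ℕ × {w : X // w ∉ U})
      (fun _ p => ⟨fn p.1 p.2.1 p.2.2, fz p.1 p.2.1 p.2.2, hzU' _ _ _⟩) k
  let n : ℕ → ℕ := fun k => (seq k).1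
  let z : ℕ → X := fun k => (seq k).2.1
  have hzU : ∀ k, z k ∉ U := fun k => (seq k).2.2
  have hseqsucc : ∀ k, seq (k+1) =
      ⟨fn (seq k).1 (seq k).2.1 (seq k).2.2,
        fz (seq k).1 (seq k).2.1 (seq k).2.2, hzU' _ _ _⟩ := fun k => rfl
  have hzcl : ∀ k, z k ∈ closure (C (n k)) := by
    intro k
    cases k with
    | zero => exact hz0c
    | succ k => exact hzc (seq k).1 (seq k).2.1 (seq k).2.2
  have hnlt : ∀ k, n k < n (k+1) := fun k => hlt (seq k).1 (seq k).2.1 (seq k).2.2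
  have hznotin : ∀ k, z k ∉ closure (C (n (k+1))) :=
    fun k => hnotin (seq k).1 (seq k).2.1 (seq k).2.2
  have hnmono : StrictMono n := strictMono_nat_of_lt_succ hnlt
  let G : ℕ → Set X := fun k => C (n k) \ closure (C (n (k+1)))
  have hGopen : ∀ k, IsOpen (G k) := fun k => (hCopen _).sdiff isClosed_closure
  have hGsub : ∀ k, G k ⊆ C (n k) := fun k => diff_subset
  have hzclG : ∀ k, z k ∈ closure (G k) := by
    intro k
    rw [mem_closure_iff]
    intro o ho hzo
    have ho' : IsOpen (o ∩ (closure (C (n (k+1))))ᶜ) := ho.inter isClosed_closure.isOpen_compl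
    have hzo' : z k ∈ o ∩ (closure (C (n (k+1))))ᶜ := ⟨hzo, hznotin k⟩
    obtain ⟨q, hq⟩ := mem_closure_iff.mp (hzcl k) _ ho' hzo'
    exact ⟨q, hq.1.1, hq.2, hq.1.2⟩
  have hGdisj : ∀ k k', k < k' → Disjoint (G k) (G k') := by
    intro k k' hkk'
    rw [Set.disjoint_left]
    intro a ha ha'
    have : C (n k') ⊆ closure (C (n (k+1))) :=
      (hCanti (hnmono.monotone hkk')).trans subset_closure
    exact ha.2 (this (hGsub k' ha'))
  -- inner families
  have hWex : ∀ k, ∃ Wb : ℕ → Set X, (𝓝 (z k)).HasAntitoneBasis Wb :=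
    fun k => (𝓝 (z k)).exists_antitone_basis
  choose Wb hWb using hWex
  have hWbmem : ∀ k i, Wb k i ∈ 𝓝 (z k) := fun k i => (hWb k).toHasBasis.mem_of_mem trivial
  have hH := fun k => inner_lemma (z k) (G k) (hGopen k) (hzclG k) (Wb k) (hWbmem k)
  choose Hf hHf using hH
  -- the cellular family
  obtain ⟨K, hKc, hKmeet⟩ := hcc {u : Set X | ∃ k i, u = Hf k i}
    (by rintro u ⟨k, i, rfl⟩; exact ⟨((hHf k).1 i).1, ((hHf k).1 i).2.1⟩)
    (by
      rintro u ⟨k, i, rfl⟩ v ⟨k', i', rfl⟩ huv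
      rcases eq_or_ne k k' with rfl | hk
      · have hii : i ≠ i' := fun h => huv (by rw [h])
        rcases (hHf k).2 i i' hii with heq | hd
        · exact absurd heq huv
        · exact hd
      · have hd : Disjoint (G k) (G k') := by
          rcases hk.lt_or_gt with h | h
          · exact hGdisj k k' h
          · exact (hGdisj k' k h).symm
        exact hd.mono ((hHf k).1 i).2.2.1 ((hHf k').1 i').2.2.1)
  have hzK : ∀ k, z k ∈ K := by
    intro k
    have : z k ∈ closure K := by
      rw [mem_closure_iff_nhds]
      intro t ht
      obtain ⟨i, -, hi⟩ := (hWb k).toHasBasis.mem_iff.mp ht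
      obtain ⟨q, hqK, hqH⟩ := hKmeet (Hf k i) ⟨k, i, rfl⟩
      exact ⟨q, hi (((hHf k).1 i).2.2.2 hqH), hqK⟩
    rwa [hKc.isClosed.closure_eq] at this
  -- cluster point of the z's
  have hle : Filter.map z Filter.atTop ≤ 𝓟 K := by
    rw [le_principal_iff, mem_map]
    exact Filter.Eventually.of_forall hzK
  haveI : NeBot (Filter.map z Filter.atTop) := map_neBot
  obtain ⟨y, hyK, hy⟩ := hKc hle
  have hyU : y ∉ U := by
    have : Uᶜ ∈ Filter.map z Filter.atTop := by
      rw [mem_map]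
      exact Filter.Eventually.of_forall fun k => hzU k
    have := clusterPt_mem_closure hy this
    rwa [hUopen.isClosed_compl.closure_eq] at this
  have hyC : ∀ m, y ∈ closure (C m) := by
    intro m
    have hmem : closure (C (n m)) ∈ Filter.map z Filter.atTop := by
      rw [mem_map]
      filter_upwards [Filter.eventually_ge_atTop m] with k hk
      exact closure_mono (hCanti (hnmono.monotone hk)) (hzcl k)
    have h1 := clusterPt_mem_closure hy hmem
    rw [closure_closure] at h1
    exact closure_mono (hCanti (hnmono.le_apply)) h1
  have hyx : y ≠ x := fun h => hyU (h ▸ hxU)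
  obtain ⟨m, hm⟩ := L1 y hyx
  exact hm (hyC m)
end

section
/- If X is a Hausdorff space with countable closed pseudocharacter and X is ω-cellular-compact, then every countable fluffy subset of X has compact closure. -/
open Set Filter Topology

def OmegaCellularCompact (X : Type*) [TopologicalSpace X] : Prop :=
  ∀ 𝒰 : Set (Set X), 𝒰.Countable → (∀ u ∈ 𝒰, IsOpen u ∧ u.Nonempty) →
    𝒰.PairwiseDisjoint id → ∃ K : Set X, IsCompact K ∧ ∀ u ∈ 𝒰, (K ∩ u).Nonempty

lemma keylem {X : Type*} [TopologicalSpace X] [T2Space X] (y : X) (V : ℕ → Set X)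
    (hVo : ∀ n, IsOpen (V n)) (hVy : ∀ n, y ∈ V n)
    (hVi : ⋂ n, closure (V n) = {y})
    (U : Set X) (hUo : IsOpen U) (hyU : y ∈ closure U) :
    ∃ 𝒢 : Set (Set X), 𝒢.Countable ∧ (∀ s ∈ 𝒢, IsOpen s ∧ s.Nonempty ∧ s ⊆ U) ∧
      𝒢.PairwiseDisjoint id ∧
      ∀ K : Set X, IsCompact K → (∀ s ∈ 𝒢, (K ∩ s).Nonempty) → y ∈ K := by
  classical
  have hclinter : ∀ (R N : Set X), y ∈ closure R → IsOpen N → y ∈ N →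
      y ∈ closure (R ∩ N) := by
    intro R N hR hNo hNy
    rw [mem_closure_iff] at hR ⊢
    intro O hO hyO
    obtain ⟨z, hz⟩ := hR (O ∩ N) (hO.inter hNo) ⟨hyO, hNy⟩
    exact ⟨z, hz.1.1, hz.2, hz.1.2⟩
  by_cases hsing : IsOpen ({y} : Set X)
  · have hyU' : y ∈ U := by
      obtain ⟨z, hz1, hz2⟩ := mem_closure_iff.mp hyU {y} hsing rfl
      rw [mem_singleton_iff] at hz1; subst hz1; exact hz2
    refine ⟨{{y}}, countable_singleton _, ?_, ?_, ?_⟩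
    · intro s hs; rw [mem_singleton_iff] at hs; subst hs
      exact ⟨hsing, ⟨y, rfl⟩, singleton_subset_iff.mpr hyU'⟩
    · exact pairwiseDisjoint_singleton _ _
    · intro K _ hmeet
      obtain ⟨z, hz1, hz2⟩ := hmeet {y} rfl
      rw [mem_singleton_iff] at hz2; exact hz2 ▸ hz1
  · set Vle : ℕ → Set X := fun n => ⋂ k ∈ Finset.range (n + 1), V k with hVledef
    have hVleo : ∀ n, IsOpen (Vle n) := fun n =>
      isOpen_biInter_finset fun k _ => hVo k
    have hVley : ∀ n, y ∈ Vle n := fun n => mem_biInter fun k _ => hVy k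
    have hVlesub : ∀ {m n : ℕ}, m ≤ n → Vle n ⊆ V m := fun {m n} h =>
      biInter_subset_of_mem (Finset.mem_range.mpr (Nat.lt_succ_of_le h))
    have hstep : ∀ (n : ℕ) (R : Set X), IsOpen R → y ∈ closure R →
        ∃ q : Set X × Set X, (IsOpen q.1 ∧ q.1.Nonempty ∧ q.1 ⊆ R ∧ q.1 ⊆ Vle n ∧
          Disjoint q.1 q.2) ∧ (IsOpen q.2 ∧ y ∈ closure q.2 ∧ q.2 ⊆ R) := by
      intro n R hRo hRy
      set S : Set X := R ∩ Vle n with hSdef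
      have hSo : IsOpen S := hRo.inter (hVleo n)
      have hSy : y ∈ closure S := hclinter R (Vle n) hRy (hVleo n) (hVley n)
      have hSne : S.Nonempty := by
        obtain ⟨z, hz⟩ := mem_closure_iff.mp hSy univ isOpen_univ (mem_univ y)
        exact ⟨z, hz.2⟩
      have hp : ∃ p ∈ S, p ≠ y := by
        by_contra hcon
        push_neg at hcon
        have : S = {y} := eq_singleton_iff_nonempty_unique_mem.mpr ⟨hSne, hcon⟩
        exact hsing (this ▸ hSo)
      obtain ⟨p, hpS, hpy⟩ := hp
      obtain ⟨A, B, hAo, hBo, hpA, hyB, hAB⟩ := t2_separation hpy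
      refine ⟨(S ∩ A, R ∩ B), ⟨hSo.inter hAo, ⟨p, hpS, hpA⟩, ?_, ?_, ?_⟩,
        hRo.inter hBo, hclinter R B hRy hBo hyB, inter_subset_left⟩
      · exact (inter_subset_left).trans inter_subset_left
      · exact (inter_subset_left).trans inter_subset_right
      · exact hAB.mono inter_subset_right inter_subset_right
    choose q hq1 hq2 using hstep
    let Rseq : ℕ → {R : Set X // IsOpen R ∧ y ∈ closure R} := fun n =>
      Nat.rec ⟨U, hUo, hyU⟩
        (fun k p => ⟨(q k p.1 p.2.1 p.2.2).2, (hq2 k p.1 p.2.1 p.2.2).1,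
          (hq2 k p.1 p.2.1 p.2.2).2.1⟩) n
    let G : ℕ → Set X := fun n => (q n (Rseq n).1 (Rseq n).2.1 (Rseq n).2.2).1
    have hG1 : ∀ n, IsOpen (G n) ∧ (G n).Nonempty ∧ G n ⊆ (Rseq n).1 ∧
        G n ⊆ Vle n ∧ Disjoint (G n) (Rseq (n + 1)).1 := fun n =>
      hq1 n (Rseq n).1 (Rseq n).2.1 (Rseq n).2.2
    have hRmono : ∀ n, (Rseq (n + 1)).1 ⊆ (Rseq n).1 := fun n =>
      (hq2 n (Rseq n).1 (Rseq n).2.1 (Rseq n).2.2).2.2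
    have hRchain : ∀ m n : ℕ, m ≤ n → (Rseq n).1 ⊆ (Rseq m).1 := by
      intro m n h
      induction n, h using Nat.le_induction with
      | base => exact subset_rfl
      | succ k hk ih => exact (hRmono k).trans ih
    have hRU : ∀ n, (Rseq n).1 ⊆ U := by
      intro n
      induction n with
      | zero => exact subset_rfl
      | succ k ih => exact (hRmono k).trans ih
    have hGd : ∀ m n : ℕ, m < n → Disjoint (G m) (G n) := by
      intro m n hmn
      exact ((hG1 m).2.2.2.2).mono_right (((hG1 n).2.2.1).trans (hRchain (m + 1) n hmn))
    refine ⟨range G, countable_range G, ?_, ?_, ?_⟩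
    · rintro s ⟨n, rfl⟩
      exact ⟨(hG1 n).1, (hG1 n).2.1, ((hG1 n).2.2.1).trans (hRU n)⟩
    · rintro s ⟨m, rfl⟩ t ⟨n, rfl⟩ hst
      rcases lt_trichotomy m n with h | h | h
      · exact hGd m n h
      · exact absurd (congrArg G h) hst
      · exact (hGd n m h).symm
    · intro K hK hmeet
      choose x hx using fun n => hmeet (G n) ⟨n, rfl⟩
      have hFK : Filter.map x Filter.atTop ≤ 𝓟 K :=
        le_principal_iff.mpr (Filter.eventually_map.mpr
          (Filter.Eventually.of_forall fun n => (hx n).1))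
      obtain ⟨z, hzK, hz⟩ := hK hFK
      have hzy : z = y := by
        have hmem : z ∈ ⋂ n, closure (V n) := by
          refine mem_iInter.mpr fun m => ?_
          rw [mem_closure_iff_clusterPt]
          refine hz.mono (le_principal_iff.mpr (Filter.mem_map.mpr ?_))
          exact Filter.mem_of_superset (Filter.mem_atTop m)
            fun n hn => hVlesub hn ((hG1 n).2.2.2.1 (hx n).2)
        rw [hVi] at hmem
        exact hmem
      exact hzy ▸ hzK

theorem stmt9 {X : Type*} [TopologicalSpace X] [T2Space X]
    (hpsi : ∀ x : X, ∃ V : ℕ → Set X, (∀ n, IsOpen (V n) ∧ x ∈ V n) ∧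
      ⋂ n, closure (V n) = {x})
    (hcc : OmegaCellularCompact X) :
    ∀ Y : Set X, Y.Countable → Fluffy Y → IsCompact (closure Y) := by
  intro Y hYc hYf
  obtain ⟨U, hU, hUd⟩ := hYf
  choose V hV hVi using hpsi
  have key : ∀ y ∈ Y, ∃ 𝒢 : Set (Set X), 𝒢.Countable ∧
      (∀ s ∈ 𝒢, IsOpen s ∧ s.Nonempty ∧ s ⊆ U y) ∧ 𝒢.PairwiseDisjoint id ∧
      ∀ K : Set X, IsCompact K → (∀ s ∈ 𝒢, (K ∩ s).Nonempty) → y ∈ K :=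
    fun y hy => keylem y (V y) (fun n => (hV y n).1) (fun n => (hV y n).2) (hVi y)
      (U y) (hU y hy).1 (hU y hy).2.2
  choose 𝒢 h1 h2 h3 h4 using key
  haveI := hYc.to_subtype
  set 𝒰 : Set (Set X) := ⋃ y : Y, 𝒢 y y.2 with h𝒰def
  have h𝒰c : 𝒰.Countable := countable_iUnion fun y => h1 y y.2
  have h𝒰o : ∀ u ∈ 𝒰, IsOpen u ∧ u.Nonempty := by
    intro u hu
    rw [mem_iUnion] at hu
    obtain ⟨a, ha⟩ := hu
    exact ⟨(h2 a a.2 u ha).1, (h2 a a.2 u ha).2.1⟩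
  have h𝒰d : 𝒰.PairwiseDisjoint id := by
    intro s hs t ht hst
    rw [mem_iUnion] at hs ht
    obtain ⟨a, ha⟩ := hs
    obtain ⟨b, hb⟩ := ht
    by_cases hab : (a : X) = b
    · have : a = b := Subtype.ext hab
      subst this
      exact h3 a a.2 ha hb hst
    · exact (hUd a.2 b.2 hab).mono (h2 a a.2 s ha).2.2 (h2 b b.2 t hb).2.2
  obtain ⟨K, hK, hKm⟩ := hcc 𝒰 h𝒰c h𝒰o h𝒰d
  have hYK : Y ⊆ K := fun y hy =>
    h4 y hy K hK fun s hs => hKm s (mem_iUnion.mpr ⟨⟨y, hy⟩, hs⟩)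
  exact hK.of_isClosed_subset isClosed_closure (closure_minimal hYK hK.isClosed)
end

section
/- Every hereditarily Lindelöf cellular-compact Hausdorff space is compact. -/
open Set

/-!
If `X` is not compact then, being Lindelöf, it is not countably compact: there is an increasing
open cover `W n` of `X` by proper subsets, and every compact set lies in some `W n`. In a
hereditarily Lindelöf Hausdorff space every point `x` is the intersection of the closures of a
decreasing sequence of neighbourhoods `B x r`, so a compact set meeting a subset of every `B x r`
contains `x`. It therefore suffices to find points `q j ∉ W j` and a cellular family having, for
all `j` and `r`, a member inside `B (q j) r`: cellular-compactness then yields a compact set that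
contains every `q j` and so lies in no `W n`. The isolated points form a cellular family, hence lie
in some `W N`, and the `q j` are taken outside it.

If every nonempty open set contains a nonempty open set whose closure meets `{q j}` in a finite
set, the members can be chosen one at a time with closures missing every `q j`, each one outside
the closures of the earlier ones. Otherwise some open `A` has all its nonempty open subsets
accumulating at infinitely many `q j`: split `A` into disjoint open sets `u n`, pick a `q j ∉ W n`
in the closure of each `u n`, and build the members for that point inside `u n`.
-/

open Filter Topology Function

section CellularCompact

variable {X : Type*} [TopologicalSpace X]

structure IsClosedPseudobase (x : X) (B : ℕ → Set X) : Prop where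
  mem_nhds : ∀ r, B r ∈ 𝓝 x
  antitone : Antitone B
  iInter_closure_subset : ⋂ r, closure (B r) ⊆ {x}

theorem exists_isClosedPseudobase [T2Space X] [HereditarilyLindelofSpace X] (x : X) :
    ∃ B, IsClosedPseudobase x B := by
  -- `{x}` is the intersection of the closures of its neighbourhoods, and countably many suffice
  have : Nonempty {V // V ∈ 𝓝 x} := ⟨⟨univ, univ_mem⟩⟩
  obtain ⟨k, hk⟩ := eq_closed_inter_nat (fun V : {V // V ∈ 𝓝 x} => closure V.1)
    fun _ => isClosed_closure
  refine ⟨fun n => ⋂ i ∈ Iic n, (k i).1, fun n => (biInter_mem (finite_Iic n)).2 fun i _ => (k i).2,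
    fun a b hab => biInter_subset_biInter_left (Iic_subset_Iic.2 hab), fun y hy => ?_⟩
  by_contra hyx
  obtain ⟨U, V, hU, hV, hyU, hxV, hUV⟩ := t2_separation hyx
  have hyk : y ∈ ⋂ V : {V // V ∈ 𝓝 x}, closure V.1 := hk ▸ mem_iInter.2 fun n =>
    closure_mono (biInter_subset_of_mem (t := fun i => (k i).1) (mem_Iic.2 le_rfl))
      (mem_iInter.1 hy n)
  exact disjoint_left.1 (hUV.closure_right hU) hyU (mem_iInter.1 hyk ⟨V, hV.mem_nhds hxV⟩)

theorem IsClosedPseudobase.mem_of_isCompact {x : X} {B : ℕ → Set X} (hB : IsClosedPseudobase x B)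
    {K : Set X} (hK : IsCompact K) (hKB : ∀ r, (K ∩ B r).Nonempty) : x ∈ K := by
  by_contra hxK
  have hcover : K ⊆ ⋃ r, (closure (B r))ᶜ := by
    rw [← compl_iInter]
    exact (subset_compl_singleton_iff.2 hxK).trans (compl_subset_compl.2 hB.iInter_closure_subset)
  obtain ⟨r, hr⟩ := hK.elim_directed_cover _ (fun r => isClosed_closure.isOpen_compl) hcover
    (Monotone.directed_le fun a b hab => compl_subset_compl.2 (closure_mono (hB.antitone hab)))
  obtain ⟨y, hyK, hyB⟩ := hKB r
  exact hr hyK (subset_closure hyB)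

theorem CellularCompact.exists_isCompact_superset (hcc : CellularCompact X) {S : Set X}
    {B : X → ℕ → Set X} (hB : ∀ x ∈ S, IsClosedPseudobase x (B x)) {𝒰 : Set (Set X)}
    (h𝒰 : ∀ u ∈ 𝒰, IsOpen u ∧ u.Nonempty) (hdisj : 𝒰.PairwiseDisjoint id)
    (h𝒰B : ∀ x ∈ S, ∀ r, ∃ u ∈ 𝒰, u ⊆ B x r) : ∃ K, IsCompact K ∧ S ⊆ K := by
  obtain ⟨K, hK, hK𝒰⟩ := hcc 𝒰 h𝒰 hdisj
  refine ⟨K, hK, fun x hx => (hB x hx).mem_of_isCompact hK fun r => ?_⟩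
  obtain ⟨u, hu, huB⟩ := h𝒰B x hx r
  exact (hK𝒰 u hu).mono (inter_subset_inter_right K huB)

theorem CellularCompact.exists_isCompact_isolated (hcc : CellularCompact X) :
    ∃ K, IsCompact K ∧ {x : X | IsOpen {x}} ⊆ K := by
  obtain ⟨K, hK, hK𝒰⟩ := hcc (singleton '' {x | IsOpen {x}})
    (by rintro _ ⟨x, hx, rfl⟩; exact ⟨hx, singleton_nonempty x⟩)
    (pairwiseDisjoint_range_singleton.subset (image_subset_range _ _))
  exact ⟨K, hK, fun x hx => inter_singleton_nonempty.1 (hK𝒰 {x} (mem_image_of_mem _ hx))⟩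

theorem exists_seq_pairwise_disjoint_of_forall_mem_nhds {S : Set X} {x : ℕ → X}
    (hxS : ∀ k, x k ∈ S) {P : ℕ → Set X → Prop}
    (h : ∀ k, ∀ G ∈ 𝓝 (x k), ∃ m ⊆ G, P k m ∧ Disjoint (closure m) S) :
    ∃ m : ℕ → Set X, (∀ k, P k (m k)) ∧ Pairwise (Disjoint on m) := by
  choose! M hMG hMP hMS using h
  let T : ℕ → Set X := fun k => Nat.rec ∅ (fun k T => T ∪ M k (closure T)ᶜ) k
  have hT : ∀ k, Disjoint (closure (T k)) S := by
    intro k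
    induction k with
    | zero => simp [T]
    | succ k ih =>
      have hG : (closure (T k))ᶜ ∈ 𝓝 (x k) :=
        isClosed_closure.isOpen_compl.mem_nhds (disjoint_right.1 ih (hxS k))
      change Disjoint (closure (T k ∪ M k (closure (T k))ᶜ)) S
      rw [closure_union]
      exact ih.union_left (hMS k _ hG)
  have hG : ∀ k, (closure (T k))ᶜ ∈ 𝓝 (x k) := fun k =>
    isClosed_closure.isOpen_compl.mem_nhds (disjoint_right.1 (hT k) (hxS k))
  have hTmono : Monotone T := monotone_nat_of_le_succ fun k => subset_union_left
  refine ⟨fun k => M k (closure (T k))ᶜ, fun k => hMP k _ (hG k),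
    (pairwise_disjoint_on _).2 fun k l hkl => ?_⟩
  have hkT : M k (closure (T k))ᶜ ⊆ T l := subset_union_right.trans (hTmono hkl)
  exact (disjoint_compl_right.mono_left subset_closure).mono hkT (hMG l _ (hG l))

theorem accPt_of_mem_closure {x : X} {u : Set X} (hu : IsOpen u) (hx : x ∈ closure u)
    (hiso : ¬IsOpen {x}) : AccPt x (𝓟 u) := by
  refine accPt_iff_nhds.2 fun U hU => ?_
  by_contra! h
  obtain ⟨y, hyU, hyu⟩ := mem_closure_iff.1 hx _ isOpen_interior (mem_interior_iff_mem_nhds.2 hU)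
  have hyx : y = x := h y ⟨interior_subset hyU, hyu⟩
  have : interior U ∩ u = {x} := Subset.antisymm
    (fun z hz => h z ⟨interior_subset hz.1, hz.2⟩) (singleton_subset_iff.2 (hyx ▸ ⟨hyU, hyu⟩))
  exact hiso (this ▸ isOpen_interior.inter hu)

theorem exists_isOpen_subset_notMem_closure_of_accPt [T2Space X] {x : X} {u G : Set X}
    (hx : AccPt x (𝓟 u)) (hu : IsOpen u) (hG : G ∈ 𝓝 x) :
    ∃ m ⊆ G ∩ u, IsOpen m ∧ m.Nonempty ∧ x ∉ closure m := by
  obtain ⟨y, ⟨hyG, hyu⟩, hyx⟩ := accPt_iff_nhds.1 hx _ (interior_mem_nhds.2 hG)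
  obtain ⟨U, V, hU, hV, hyU, hxV, hUV⟩ := t2_separation hyx
  refine ⟨interior G ∩ u ∩ U, inter_subset_left.trans (inter_subset_inter_left u interior_subset),
    (isOpen_interior.inter hu).inter hU, ⟨y, ⟨hyG, hyu⟩, hyU⟩, fun hx' => ?_⟩
  exact disjoint_left.1 ((hUV.mono_left inter_subset_right).closure_left hV) hx' hxV

theorem exists_seq_pairwise_disjoint_isOpen_of_accPt [T2Space X] {x : X} {u : Set X}
    (hx : AccPt x (𝓟 u)) (hu : IsOpen u) {N : ℕ → Set X} (hN : ∀ r, N r ∈ 𝓝 x) :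
    ∃ m : ℕ → Set X, (∀ r, IsOpen (m r) ∧ (m r).Nonempty ∧ m r ⊆ u ∩ N r) ∧
      Pairwise (Disjoint on m) :=
  exists_seq_pairwise_disjoint_of_forall_mem_nhds (S := {x}) (fun _ => rfl)
    (P := fun r m => IsOpen m ∧ m.Nonempty ∧ m ⊆ u ∩ N r) fun r G hG => by
    obtain ⟨m, hmGu, hm, hmne, hxm⟩ :=
      exists_isOpen_subset_notMem_closure_of_accPt hx hu (inter_mem hG (hN r))
    exact ⟨m, hmGu.trans (inter_subset_left.trans inter_subset_left),
      ⟨hm, hmne, fun y hy => ⟨(hmGu hy).2, (hmGu hy).1.2⟩⟩, disjoint_singleton_right.2 hxm⟩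

theorem IsOpen.exists_isOpen_subset_disjoint_closure [T2Space X] {U F : Set X} (hU : IsOpen U)
    (hUF : (U \ F).Nonempty) (hF : IsCompact F) :
    ∃ m ⊆ U, IsOpen m ∧ m.Nonempty ∧ Disjoint (closure m) F := by
  obtain ⟨y, hyU, hyF⟩ := hUF
  obtain ⟨V, V', hV, hV', hyV, hFV', hVV'⟩ :=
    SeparatedNhds.of_isCompact_isCompact isCompact_singleton hF (disjoint_singleton_left.2 hyF)
  refine ⟨U ∩ V, inter_subset_left, hU.inter hV, ⟨y, hyU, hyV rfl⟩, ?_⟩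
  exact ((hVV'.mono_left inter_subset_right).closure_left hV').mono_right hFV'

theorem exists_isOpen_subset_disjoint_closure_of_finite [T2Space X] {S : Set X}
    (hS : ∀ x ∈ S, ¬IsOpen {x})
    (hfin : ∀ A, IsOpen A → A.Nonempty → ∃ V ⊆ A, IsOpen V ∧ V.Nonempty ∧ (closure V ∩ S).Finite)
    {A : Set X} (hA : IsOpen A) (hAne : A.Nonempty) :
    ∃ m ⊆ A, IsOpen m ∧ m.Nonempty ∧ Disjoint (closure m) S := by
  obtain ⟨V, hVA, hV, ⟨y, hy⟩, hVS⟩ := hfin A hA hAne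
  -- otherwise `V` is a finite open set, so its points are isolated
  have hVS' : (V \ (closure V ∩ S)).Nonempty := by
    by_contra h
    rw [not_nonempty_iff_eq_empty, sdiff_eq_empty] at h
    exact hS y (h hy).2 (isOpen_singleton_of_finite_mem_nhds y (hV.mem_nhds hy) (hVS.subset h))
  obtain ⟨m, hmV, hm, hmne, hmS⟩ := hV.exists_isOpen_subset_disjoint_closure hVS' hVS.isCompact
  refine ⟨m, hmV.trans hVA, hm, hmne, disjoint_left.2 fun z hz hzS => ?_⟩
  exact disjoint_left.1 hmS hz ⟨closure_mono hmV hz, hzS⟩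

theorem CellularCompact.exists_isCompact_range_subset [T2Space X] (hcc : CellularCompact X)
    {B : X → ℕ → Set X} (hB : ∀ x, IsClosedPseudobase x (B x)) {q : ℕ → X}
    (hq : ∀ j, ¬IsOpen {q j})
    (hfin : ∀ A, IsOpen A → A.Nonempty →
      ∃ V ⊆ A, IsOpen V ∧ V.Nonempty ∧ (closure V ∩ range q).Finite) :
    ∃ K, IsCompact K ∧ range q ⊆ K := by
  -- the member for the pair `(j, r)` is chosen at step `Nat.pair j r`
  obtain ⟨m, hm, hdisj⟩ := exists_seq_pairwise_disjoint_of_forall_mem_nhds (S := range q)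
    (x := fun k => q k.unpair.1)
    (P := fun k m => IsOpen m ∧ m.Nonempty ∧ m ⊆ B (q k.unpair.1) k.unpair.2)
    (fun k => mem_range_self _) fun k G hG => by
      obtain ⟨m, hmG, hm, hmne, hmS⟩ := exists_isOpen_subset_disjoint_closure_of_finite
        (by rintro _ ⟨j, rfl⟩; exact hq j) hfin isOpen_interior
        ⟨_, mem_interior_iff_mem_nhds.2 (inter_mem hG ((hB _).mem_nhds _))⟩
      exact ⟨m, hmG.trans (interior_subset.trans inter_subset_left),
        ⟨hm, hmne, hmG.trans (interior_subset.trans inter_subset_right)⟩, hmS⟩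
  refine hcc.exists_isCompact_superset (fun x _ => hB x) (𝒰 := range m)
    (forall_mem_range.2 fun k => ⟨(hm k).1, (hm k).2.1⟩) hdisj.range_pairwise ?_
  rintro _ ⟨j, rfl⟩ r
  exact ⟨m (Nat.pair j r), mem_range_self _, by simpa using (hm (Nat.pair j r)).2.2⟩

theorem CellularCompact.exists_isCompact_forall_inter_nonempty [T2Space X]
    (hcc : CellularCompact X) {B : X → ℕ → Set X} (hB : ∀ x, IsClosedPseudobase x (B x))
    {A : Set X} (hA : IsOpen A) (hAne : A.Nonempty) {F : ℕ → Set X}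
    (hFiso : ∀ n, ∀ x ∈ F n, ¬IsOpen {x})
    (hF : ∀ V ⊆ A, IsOpen V → V.Nonempty → ∀ n, (closure V ∩ F n).Nonempty) :
    ∃ K, IsCompact K ∧ ∀ n, (K ∩ F n).Nonempty := by
  obtain ⟨x, hxA, hxF⟩ := hF A subset_rfl hA hAne 0
  obtain ⟨u, hu, hudisj⟩ := exists_seq_pairwise_disjoint_isOpen_of_accPt
    (accPt_of_mem_closure hA hxA (hFiso 0 x hxF)) hA fun _ => univ_mem
  choose q hqu hqF using fun n =>
    hF (u n) ((hu n).2.2.trans inter_subset_left) (hu n).1 (hu n).2.1 n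
  choose m hm hmdisj using fun n => exists_seq_pairwise_disjoint_isOpen_of_accPt
    (accPt_of_mem_closure (hu n).1 (hqu n) (hFiso n _ (hqF n))) (hu n).1 (hB (q n)).mem_nhds
  have hdisj : Pairwise (Disjoint on uncurry m) := by
    rintro ⟨n, r⟩ ⟨n', r'⟩ hne
    by_cases hn : n = n'
    · subst hn
      exact hmdisj n fun h => hne (congrArg _ h)
    · exact (hudisj hn).mono ((hm n r).2.2.trans inter_subset_left)
        ((hm n' r').2.2.trans inter_subset_left)
  obtain ⟨K, hK, hqK⟩ := hcc.exists_isCompact_superset (S := range q) (fun x _ => hB x)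
    (𝒰 := range (uncurry m)) (forall_mem_range.2 fun p => ⟨(hm p.1 p.2).1, (hm p.1 p.2).2.1⟩)
    hdisj.range_pairwise (by
      rintro _ ⟨n, rfl⟩ r
      exact ⟨m n r, ⟨(n, r), rfl⟩, (hm n r).2.2.trans inter_subset_right⟩)
  exact ⟨K, hK, fun n => ⟨q n, hqK (mem_range_self n), hqF n⟩⟩

theorem CellularCompact.exists_isCompact_forall_diff_nonempty [T2Space X]
    (hcc : CellularCompact X) {B : X → ℕ → Set X} (hB : ∀ x, IsClosedPseudobase x (B x))
    {W : ℕ → Set X} (hW : Monotone W) {q : ℕ → X} (hqW : ∀ j, q j ∉ W j)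
    (hqiso : ∀ j, ¬IsOpen {q j}) :
    ∃ K, IsCompact K ∧ ∀ n, (K \ W n).Nonempty := by
  have hqfin : ∀ n, (range q ∩ W n).Finite := fun n => ((finite_Iio n).image q).subset <| by
    rintro _ ⟨⟨j, rfl⟩, hj⟩
    exact ⟨j, mem_Iio.2 (lt_of_not_ge fun hnj => hqW j (hW hnj hj)), rfl⟩
  by_cases hclean : ∀ A, IsOpen A → A.Nonempty →
      ∃ V ⊆ A, IsOpen V ∧ V.Nonempty ∧ (closure V ∩ range q).Finite
  · obtain ⟨K, hK, hqK⟩ := hcc.exists_isCompact_range_subset hB hqiso hclean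
    exact ⟨K, hK, fun n => ⟨q n, hqK (mem_range_self n), hqW n⟩⟩
  · push Not at hclean
    obtain ⟨A, hA, hAne, hAinf⟩ := hclean
    obtain ⟨K, hK, hKF⟩ := hcc.exists_isCompact_forall_inter_nonempty hB hA hAne
      (F := fun n => range q \ W n) (fun n x ⟨⟨j, hj⟩, _⟩ => hj ▸ hqiso j)
      fun V hVA hV hVne n => ((hAinf V hVA hV hVne).sdiff (hqfin n)).nonempty.mono
        fun x hx => ⟨hx.1.1, hx.1.2, fun h => hx.2 ⟨hx.1.2, h⟩⟩
    exact ⟨K, hK, fun n => (hKF n).mono fun x hx => ⟨hx.1, hx.2.2⟩⟩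

theorem exists_monotone_isOpen_cover_of_not_countablyCompactSpace
    (h : ¬CountablyCompactSpace X) :
    ∃ W : ℕ → Set X, (∀ n, IsOpen (W n)) ∧ Monotone W ∧ ⋃ n, W n = univ ∧
      ∀ n, (W n)ᶜ.Nonempty := by
  rw [← isCountablyCompact_univ_iff, isCountablyCompact_iff_countable_open_cover'] at h
  push Not at h
  obtain ⟨U, hU, hcov, hfin⟩ := h
  refine ⟨accumulate U, fun n => isOpen_biUnion fun i _ => hU i, monotone_accumulate,
    by rw [iUnion_accumulate]; exact univ_subset_iff.1 hcov, fun n => ?_⟩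
  rw [nonempty_compl, accumulate_def]
  intro heq
  exact hfin (Iic n) (finite_Iic n) heq.ge

end CellularCompact

theorem stmt10 {X : Type*} [TopologicalSpace X] [T2Space X] [HereditarilyLindelofSpace X]
    (hcc : CellularCompact X) : CompactSpace X := by
  suffices CountablyCompactSpace X from LindelofSpace.compactSpace
  by_contra hX
  obtain ⟨W, hWo, hW, hWcov, hWne⟩ := exists_monotone_isOpen_cover_of_not_countablyCompactSpace hX
  have hbound : ∀ K, IsCompact K → ∃ n, K ⊆ W n := fun K hK =>
    hK.elim_directed_cover W hWo (hWcov ▸ subset_univ K) hW.directed_le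
  choose B hB using exists_isClosedPseudobase (X := X)
  obtain ⟨K₀, hK₀, hiso⟩ := hcc.exists_isCompact_isolated
  obtain ⟨N, hN⟩ := hbound K₀ hK₀
  choose q hq using fun j => hWne (j + N)
  obtain ⟨K, hK, hKW⟩ := hcc.exists_isCompact_forall_diff_nonempty hB hW (q := q)
    (fun j h => hq j (hW (Nat.le_add_right j N) h))
    fun j h => hq j (hW (Nat.le_add_left N j) (hN (hiso h)))
  obtain ⟨n, hn⟩ := hbound K hK
  obtain ⟨x, hxK, hxW⟩ := hKW n
  exact hxW (hn hxK)
end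

section
/- If X is a regular space of countable spread that is not hereditarily Lindelöf, then X contains a subspace that is hereditarily separable but not hereditarily Lindelöf (an S-space). -/
/-!
A space that is not hereditarily Lindelöf contains a right-separated sequence `x` of type `ω₁`,
and its range `S` is not Lindelöf. If some `T ⊆ S` were not separable, one could pick inside `T`
a left-separated `ω₁`-sequence, always choosing the point of least `x`-index; that sequence is a
strictly increasing reindexing of `x`, hence also right-separated, and a sequence that is both
left- and right-separated has discrete range. That range is uncountable, contradicting countable
spread.
-/

open Set Topology TopologicalSpace
open Cardinal Ordinal

noncomputable abbrev Omega1 : Type := (ω₁ : Ordinal.{0}).ToType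

namespace Omega1

theorem countable_Iio (a : Omega1) : (Iio a).Countable := by
  rw [← le_aleph0_iff_set_countable, ← lt_aleph_one_iff]
  simpa using mk_Iio_lt a (by simp)

instance : Uncountable Omega1 := by
  rw [← not_countable_iff, ← mk_le_aleph0_iff]
  simp

theorem exists_gt_of_countable {s : Set Omega1} (hs : s.Countable) : ∃ b, ∀ a ∈ s, a < b := by
  by_contra! h
  have hcof := Order.cof_le (s := s) h
  rw [cof_toType, cof_omega_one] at hcof
  exact absurd (hcof.trans (le_aleph0_iff_set_countable.mpr hs)) (by simp)

theorem exists_seq {Y : Type*} {R : Set Y → Y → Prop}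
    (h : ∀ s : Set Y, s.Countable → ∃ y, R s y) :
    ∃ f : Omega1 → Y, ∀ α, R (f '' Iio α) (f α) := by
  choose g hg using h
  have hrange (α : Omega1) (u : Iio α → Y) : (range u).Countable :=
    haveI := (countable_Iio α).to_subtype
    countable_range u
  let f : Omega1 → Y := wellFounded_lt.fix fun α ih =>
    g (range fun β : Iio α => ih β β.2) (hrange _ _)
  refine ⟨f, fun α => ?_⟩
  have hf : f α = g (range fun β : Iio α => f β) (hrange _ _) := wellFounded_lt.fix_eq _ α
  rw [hf, image_eq_range]
  exact hg _ _

end Omega1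

section Separated

variable {ι X : Type*} [TopologicalSpace X]

/-- For injective `f` this says that every initial segment `f '' Iic i` is open in `range f`. -/
def IsRightSeparated [Preorder ι] (f : ι → X) : Prop := ∀ i, f i ∉ closure (f '' Ioi i)

def IsLeftSeparated [Preorder ι] (f : ι → X) : Prop := ∀ i, f i ∉ closure (f '' Iio i)

theorem IsRightSeparated.comp_strictMono {κ : Type*} [Preorder ι] [Preorder κ] {f : ι → X}
    (hf : IsRightSeparated f) {γ : κ → ι} (hγ : StrictMono γ) : IsRightSeparated (f ∘ γ) := by
  intro k hk
  refine hf (γ k) (closure_mono ?_ hk)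
  rintro _ ⟨j, hj, rfl⟩
  exact ⟨γ j, hγ hj, rfl⟩

theorem IsLeftSeparated.injective [LinearOrder ι] {f : ι → X} (hf : IsLeftSeparated f) :
    Function.Injective f := by
  intro i j hij
  by_contra hne
  rcases lt_or_gt_of_ne hne with h | h
  · exact hf j (subset_closure ⟨i, h, hij⟩)
  · exact hf i (subset_closure ⟨j, h, hij.symm⟩)

theorem IsLeftSeparated.discreteTopology_range [LinearOrder ι] {f : ι → X}
    (hl : IsLeftSeparated f) (hr : IsRightSeparated f) : DiscreteTopology (range f) := by
  rw [discreteTopology_subtype_iff]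
  rintro _ ⟨i, rfl⟩
  rw [← nhdsWithin_inter', ← Filter.empty_mem_iff_bot, mem_nhdsWithin]
  refine ⟨(closure (f '' Iio i))ᶜ ∩ (closure (f '' Ioi i))ᶜ,
    isClosed_closure.isOpen_compl.inter isClosed_closure.isOpen_compl, ⟨hl i, hr i⟩, ?_⟩
  rintro _ ⟨⟨hlt, hgt⟩, hne, j, rfl⟩
  rcases lt_or_gt_of_ne (ne_of_apply_ne f hne) with h | h
  · exact hlt (subset_closure ⟨j, h, rfl⟩)
  · exact hgt (subset_closure ⟨j, h, rfl⟩)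

theorem IsRightSeparated.not_isLindelof_range {x : Omega1 → X} (hx : IsRightSeparated x) :
    ¬ IsLindelof (range x) := by
  intro hL
  obtain ⟨C, hC, hcover⟩ := hL.elim_countable_subcover (fun α => (closure (x '' Ioi α))ᶜ)
    (fun _ => isClosed_closure.isOpen_compl)
    (by rintro _ ⟨α, rfl⟩; exact mem_iUnion.mpr ⟨α, hx α⟩)
  obtain ⟨b, hb⟩ := Omega1.exists_gt_of_countable hC
  obtain ⟨α, hαC, hbα⟩ := mem_iUnion₂.mp (hcover ⟨b, rfl⟩)
  exact hbα (subset_closure ⟨b, hb α hαC, rfl⟩)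

theorem exists_isRightSeparated_of_not_isLindelof {A : Set X} (hA : ¬ IsLindelof A) :
    ∃ x : Omega1 → X, IsRightSeparated x := by
  obtain ⟨κ, U, hUo, hAU, hU⟩ : ∃ (κ : Type _) (U : κ → Set X), (∀ k, IsOpen (U k)) ∧
      A ⊆ ⋃ k, U k ∧ ∀ t : Set κ, t.Countable → ¬ A ⊆ ⋃ k ∈ t, U k := by
    simpa [isLindelof_iff_countable_subcover] using hA
  obtain ⟨f, hf⟩ := Omega1.exists_seq (R := fun s (p : X × κ) => p.1 ∈ U p.2 ∧
      p.1 ∉ ⋃ k ∈ Prod.snd '' s, U k) fun s hs => by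
    obtain ⟨y, hyA, hy⟩ := not_subset.mp (hU _ (hs.image Prod.snd))
    obtain ⟨k, hk⟩ := mem_iUnion.mp (hAU hyA)
    exact ⟨(y, k), hk, hy⟩
  refine ⟨fun α => (f α).1, fun α hα => ?_⟩
  obtain ⟨_, hβU, β, hβ, rfl⟩ := mem_closure_iff.mp hα _ (hUo (f α).2) (hf α).1
  exact (hf β).2 (mem_biUnion ⟨f α, ⟨α, hβ, rfl⟩, rfl⟩ hβU)

theorem exists_notMem_closure_of_not_separableSpace {T c : Set X} (hT : ¬ SeparableSpace T)
    (hc : c.Countable) (hcT : c ⊆ T) : ∃ z ∈ T, z ∉ closure c := by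
  by_contra! hcl
  refine hT ⟨⟨Subtype.val ⁻¹' c, hc.preimage Subtype.val_injective, Subtype.dense_iff.mpr ?_⟩⟩
  rwa [Subtype.image_preimage_coe, inter_eq_self_of_subset_right hcT]

theorem exists_strictMono_isLeftSeparated_comp [LinearOrder ι] [WellFoundedLT ι] {x : ι → X}
    {T : Set X} (hTx : T ⊆ range x) (hT : ¬ SeparableSpace T) :
    ∃ γ : Omega1 → ι, StrictMono γ ∧ IsLeftSeparated (x ∘ γ) := by
  set P : Set ι → Set ι := fun s => {δ | x δ ∈ T ∧ x δ ∉ closure (x '' s ∩ T)}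
  obtain ⟨γ, hγ⟩ := Omega1.exists_seq (R := fun s δ => IsLeast (P s) δ) fun s hs => by
    obtain ⟨z, hzT, hz⟩ := exists_notMem_closure_of_not_separableSpace hT
      ((hs.image x).mono inter_subset_left) inter_subset_right
    obtain ⟨δ, rfl⟩ := hTx hzT
    exact ⟨wellFounded_lt.min (P s) ⟨δ, hzT, hz⟩, wellFounded_lt.min_mem _ _,
      fun _ h => wellFounded_lt.min_le h⟩
  have himage : ∀ α, x '' (γ '' Iio α) ∩ T = (x ∘ γ) '' Iio α := fun α => by
    rw [← image_comp, inter_eq_left]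
    rintro _ ⟨β, -, rfl⟩
    exact (hγ β).1.1
  have hleft : IsLeftSeparated (x ∘ γ) := fun α => by
    rw [← himage]
    exact (hγ α).1.2
  have hmono : Monotone γ := fun α β hαβ =>
    (hγ α).2 ⟨(hγ β).1.1, fun h => (hγ β).1.2 (closure_mono
      (inter_subset_inter_left _ (image_mono (image_mono (Iio_subset_Iio hαβ)))) h)⟩
  exact ⟨γ, hmono.strictMono_of_injective hleft.injective.of_comp, hleft⟩

theorem IsRightSeparated.separableSpace_of_subset_range [LinearOrder ι] [WellFoundedLT ι]
    (hspread : ∀ D : Set X, DiscreteTopology D → D.Countable) {x : ι → X}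
    (hx : IsRightSeparated x) {T : Set X} (hTx : T ⊆ range x) : SeparableSpace T := by
  by_contra hT
  obtain ⟨γ, hγ, hleft⟩ := exists_strictMono_isLeftSeparated_comp hTx hT
  have hcount := (hspread _ (hleft.discreteTopology_range (hx.comp_strictMono hγ))).preimage
    hleft.injective
  rw [preimage_range, countable_univ_iff] at hcount
  exact not_countable hcount

end Separated

theorem stmt13_general {X : Type*} [TopologicalSpace X]
    (hspread : ∀ D : Set X, DiscreteTopology D → D.Countable)
    (hnhL : ¬ HereditarilyLindelofSpace X) :
    ∃ S : Set X, (∀ T : Set X, T ⊆ S → SeparableSpace T) ∧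
      ∃ T : Set X, T ⊆ S ∧ ¬ LindelofSpace T := by
  obtain ⟨A, hA⟩ : ∃ A : Set X, ¬ IsLindelof A := by
    by_contra! h
    exact hnhL ⟨fun A _ => h A⟩
  obtain ⟨x, hx⟩ := exists_isRightSeparated_of_not_isLindelof hA
  exact ⟨range x, fun _ hT => hx.separableSpace_of_subset_range hspread hT, range x, subset_rfl,
    fun h => hx.not_isLindelof_range (isLindelof_iff_lindelofSpace.mpr h)⟩

theorem stmt13 {X : Type*} [TopologicalSpace X] [T2Space X] [RegularSpace X]
    (hspread : ∀ D : Set X, DiscreteTopology D → D.Countable)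
    (hnhL : ¬ HereditarilyLindelofSpace X) :
    ∃ S : Set X, (∀ T : Set X, T ⊆ S → SeparableSpace T) ∧
      ∃ T : Set X, T ⊆ S ∧ ¬ LindelofSpace T :=
  stmt13_general hspread hnhL
end

section
/- Let X be a π-regular space with a countable π-base 𝒜, and let H be a countable nowhere dense subset of X such that every h ∈ H has a countable neighborhood base. Then 𝒜 has a pairwise disjoint subfamily ℬ such that ℬ is a local π-base at every point h ∈ H (every neighborhood of each h ∈ H contains a member of ℬ). -/
open Set Filter

/-- X is π-regular: every nonempty open set contains the closure of some nonempty open set. -/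
def PiRegular (X : Type*) [TopologicalSpace X] : Prop :=
  ∀ U : Set X, IsOpen U → U.Nonempty → ∃ S : Set X, IsOpen S ∧ S.Nonempty ∧ closure S ⊆ U

def IsPiBase {X : Type*} [TopologicalSpace X] (𝒜 : Set (Set X)) : Prop :=
  (∀ A ∈ 𝒜, IsOpen A ∧ A.Nonempty) ∧
    ∀ U : Set X, IsOpen U → U.Nonempty → ∃ A ∈ 𝒜, A ⊆ U

noncomputable def bseq {X : Type*} [TopologicalSpace X] (𝒜 : Set (Set X)) (H : Set X)
    (T : ℕ → Set X) : ℕ → Set X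
  | m => Classical.epsilon (fun B : Set X => B ∈ 𝒜 ∧ B ⊆ T m ∧
      Disjoint (closure B) (closure H) ∧ ∀ j, j < m → Disjoint B (bseq 𝒜 H T j))
  termination_by m => m
  decreasing_by assumption

lemma bseq_spec {X : Type*} [TopologicalSpace X] {𝒜 : Set (Set X)} {H : Set X}
    (hreg : PiRegular X) (h𝒜 : IsPiBase 𝒜) (hHnd : interior (closure H) = ∅)
    (pt : ℕ → X) (hpt : ∀ m, pt m ∈ H) (T : ℕ → Set X) (hT : ∀ m, T m ∈ nhds (pt m)) :
    ∀ m, bseq 𝒜 H T m ∈ 𝒜 ∧ bseq 𝒜 H T m ⊆ T m ∧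
      Disjoint (closure (bseq 𝒜 H T m)) (closure H) ∧
      ∀ j, j < m → Disjoint (bseq 𝒜 H T m) (bseq 𝒜 H T j) := by
  intro m
  induction m using Nat.strong_induction_on with
  | _ m ih =>
    have hC : IsClosed (⋃ j ∈ Finset.range m, closure (bseq 𝒜 H T j)) :=
      Set.Finite.isClosed_biUnion (Finset.finite_toSet _) (fun j _ => isClosed_closure)
    have hptC : pt m ∉ ⋃ j ∈ Finset.range m, closure (bseq 𝒜 H T j) := by
      simp only [Set.mem_iUnion, not_exists]
      intro j hj hmem
      exact (ih j (Finset.mem_range.mp hj)).2.2.1.le_bot ⟨hmem, subset_closure (hpt m)⟩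
    set W : Set X := interior (T m) ∩ (⋃ j ∈ Finset.range m, closure (bseq 𝒜 H T j))ᶜ with hWdef
    have hWopen : IsOpen W := isOpen_interior.inter hC.isOpen_compl
    have hptW : pt m ∈ W := ⟨mem_interior_iff_mem_nhds.mpr (hT m), hptC⟩
    have hWH : (W \ closure H).Nonempty := by
      by_contra hcon
      rw [Set.not_nonempty_iff_eq_empty, Set.diff_eq_empty] at hcon
      have : W ⊆ interior (closure H) := interior_maximal hcon hWopen
      rw [hHnd] at this
      exact this hptW
    obtain ⟨S, hSopen, hSne, hScl⟩ := hreg (W \ closure H) (hWopen.sdiff isClosed_closure) hWH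
    obtain ⟨B, hB𝒜, hBS⟩ := h𝒜.2 S hSopen hSne
    have hBcl : closure B ⊆ W \ closure H := (closure_mono hBS).trans hScl
    have hBW : B ⊆ W \ closure H := subset_closure.trans hBcl
    have hex : ∃ B : Set X, B ∈ 𝒜 ∧ B ⊆ T m ∧
        Disjoint (closure B) (closure H) ∧ ∀ j, j < m → Disjoint B (bseq 𝒜 H T j) := by
      refine ⟨B, hB𝒜, ?_, ?_, ?_⟩
      · exact fun x hx => interior_subset (hBW hx).1.1
      · exact Set.disjoint_left.mpr fun x hx => (hBcl hx).2
      · intro j hj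
        refine Set.disjoint_left.mpr fun x hx hx' => ?_
        exact (hBW hx).1.2 (Set.mem_biUnion (Finset.mem_range.mpr hj) (subset_closure hx'))
    have := Classical.epsilon_spec hex
    rw [bseq]
    exact this

theorem stmt14 {X : Type*} [TopologicalSpace X] [T2Space X]
    (hreg : PiRegular X) {𝒜 : Set (Set X)} (h𝒜 : IsPiBase 𝒜) (h𝒜c : 𝒜.Countable)
    {H : Set X} (hHc : H.Countable) (hHnd : interior (closure H) = ∅)
    (hchar : ∀ h ∈ H, (nhds h).IsCountablyGenerated) :
    ∃ ℬ ⊆ 𝒜, ℬ.PairwiseDisjoint id ∧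
      ∀ h ∈ H, ∀ N ∈ nhds h, ∃ B ∈ ℬ, B ⊆ N := by
  rcases H.eq_empty_or_nonempty with hHe | hHne
  · exact ⟨∅, empty_subset _, Set.pairwiseDisjoint_empty, by simp [hHe]⟩
  obtain ⟨e, he⟩ := Set.Countable.exists_eq_range hHc hHne
  have heH : ∀ n, e n ∈ H := fun n => he ▸ Set.mem_range_self n
  have hbasis : ∀ n, ∃ s : ℕ → Set X, (nhds (e n)).HasAntitoneBasis s := fun n =>
    haveI := hchar (e n) (heH n)
    Filter.exists_antitone_basis (nhds (e n))
  choose s hs using hbasis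
  set pt : ℕ → X := fun m => e m.unpair.1 with hptdef
  set T : ℕ → Set X := fun m => s m.unpair.1 m.unpair.2 with hTdef
  have hpt : ∀ m, pt m ∈ H := fun m => heH _
  have hT : ∀ m, T m ∈ nhds (pt m) := fun m => (hs m.unpair.1).1.mem_of_mem trivial
  have spec := bseq_spec hreg h𝒜 hHnd pt hpt T hT
  refine ⟨Set.range (bseq 𝒜 H T), ?_, ?_, ?_⟩
  · rintro _ ⟨m, rfl⟩; exact (spec m).1
  · rintro _ ⟨m, rfl⟩ _ ⟨n, rfl⟩ hne
    rcases lt_trichotomy m n with h | h | h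
    · exact ((spec n).2.2.2 m h).symm
    · exact absurd (congrArg _ h) hne
    · exact (spec m).2.2.2 n h
  · intro h hh N hN
    obtain ⟨i, rfl⟩ : ∃ i, e i = h := by rwa [he, Set.mem_range] at hh
    obtain ⟨k, -, hk⟩ := (hs i).1.mem_iff.mp hN
    refine ⟨bseq 𝒜 H T (Nat.pair i k), Set.mem_range_self _, ?_⟩
    have := (spec (Nat.pair i k)).2.1
    rw [hTdef] at this
    simp only [Nat.unpair_pair] at this
    exact this.trans hk
end

section
/- Let X be a π-regular cellular-compact space with countable π-weight, and let H be a countable nowhere dense subset of X such that every point of H has countable character. Then the closure of H is compact. -/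
open Set Filter

theorem stmt15 {X : Type*} [TopologicalSpace X] [T2Space X]
    (hreg : PiRegular X) (hcc : CellularCompact X)
    (hπw : ∃ 𝒜 : Set (Set X), 𝒜.Countable ∧ IsPiBase 𝒜)
    {H : Set X} (hHc : H.Countable) (hHnd : interior (closure H) = ∅)
    (hchar : ∀ h ∈ H, (nhds h).IsCountablyGenerated) :
    IsCompact (closure H) := by
  rcases Set.eq_empty_or_nonempty H with rfl | hne
  · simp only [closure_empty]; exact isCompact_empty
  obtain ⟨f, rfl⟩ := hHc.exists_eq_range hne
  have hmem : ∀ n, f n ∈ range f := fun n => mem_range_self n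
  have hcl : ∀ n, f n ∈ closure (range f) := fun n => subset_closure (hmem n)
  have hbs : ∀ n : ℕ, ∃ b : ℕ → Set X, (nhds (f n)).HasAntitoneBasis b := by
    intro n
    haveI := hchar (f n) (hmem n)
    exact (nhds (f n)).exists_antitone_basis
  choose b hb using hbs
  -- the step lemma : given a closed set A disjoint from `closure H`, we can choose a
  -- nonempty open set inside the prescribed basic neighborhood whose closure misses
  -- both A and `closure H`.
  have step : ∀ (A : Set X) (n : ℕ), ∃ S : Set X,
      IsClosed A → A ∩ closure (range f) = ∅ →
        IsOpen S ∧ S.Nonempty ∧ S ⊆ b n.unpair.1 n.unpair.2 ∧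
        closure S ∩ closure (range f) = ∅ ∧ closure S ∩ A = ∅ := by
    intro A n
    by_cases hA : IsClosed A ∧ A ∩ closure (range f) = ∅
    · set i := n.unpair.1 with hi
      set k := n.unpair.2 with hk
      have hbn : b i k ∈ nhds (f i) := (hb i).toHasBasis.mem_of_mem trivial
      have hfU : f i ∈ interior (b i k) ∩ Aᶜ := by
        refine ⟨mem_interior_iff_mem_nhds.mpr hbn, ?_⟩
        intro hfa
        have : f i ∈ A ∩ closure (range f) := ⟨hfa, hcl i⟩
        rw [hA.2] at this
        exact this
      have hUopen : IsOpen (interior (b i k) ∩ Aᶜ) :=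
        isOpen_interior.inter hA.1.isOpen_compl
      have hVopen : IsOpen ((interior (b i k) ∩ Aᶜ) \ closure (range f)) :=
        hUopen.sdiff isClosed_closure
      have hVne : ((interior (b i k) ∩ Aᶜ) \ closure (range f)).Nonempty := by
        rw [Set.nonempty_iff_ne_empty]
        intro hcon
        have hsub : interior (b i k) ∩ Aᶜ ⊆ closure (range f) := Set.diff_eq_empty.mp hcon
        have : interior (b i k) ∩ Aᶜ ⊆ interior (closure (range f)) :=
          interior_maximal hsub hUopen
        rw [hHnd] at this
        exact this hfU
      obtain ⟨S, hSopen, hSne, hScl⟩ := hreg _ hVopen hVne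
      refine ⟨S, fun _ _ => ⟨hSopen, hSne, ?_, ?_, ?_⟩⟩
      · intro x hx
        exact interior_subset (hScl (subset_closure hx)).1.1
      · apply Set.eq_empty_iff_forall_notMem.mpr
        rintro x ⟨hx1, hx2⟩
        exact (hScl hx1).2 hx2
      · apply Set.eq_empty_iff_forall_notMem.mpr
        rintro x ⟨hx1, hx2⟩
        exact (hScl hx1).1.2 hx2
    · exact ⟨∅, fun h1 h2 => absurd ⟨h1, h2⟩ hA⟩
  choose pick hpick using step
  -- build the sequence of disjoint open sets
  set A : ℕ → Set X := fun n => Nat.rec ∅ (fun m Am => Am ∪ closure (pick Am m)) n with hAdef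
  have hAs : ∀ n, A (n + 1) = A n ∪ closure (pick (A n) n) := fun n => rfl
  set W : ℕ → Set X := fun n => pick (A n) n with hWdef
  have inv : ∀ n, IsClosed (A n) ∧ A n ∩ closure (range f) = ∅ := by
    intro n
    induction n with
    | zero => exact ⟨isClosed_empty, by simp [hAdef]⟩
    | succ m ih =>
      have h := hpick (A m) m ih.1 ih.2
      constructor
      · exact ih.1.union isClosed_closure
      · rw [hAs, Set.union_inter_distrib_right, ih.2, h.2.2.2.1, Set.union_empty]
  have hW : ∀ n, IsOpen (W n) ∧ (W n).Nonempty ∧ W n ⊆ b n.unpair.1 n.unpair.2 ∧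
      closure (W n) ∩ closure (range f) = ∅ ∧ closure (W n) ∩ A n = ∅ :=
    fun n => hpick (A n) n (inv n).1 (inv n).2
  have hmono : Monotone A := monotone_nat_of_le_succ fun n => by
    rw [hAs]; exact Set.subset_union_left
  have hWA : ∀ j n, j < n → closure (W j) ⊆ A n := by
    intro j n hjn
    have h1 : closure (W j) ⊆ A (j + 1) := by
      rw [hAs]; exact Set.subset_union_right
    exact h1.trans (hmono hjn)
  have hdisj : ∀ j n, j < n → W j ∩ W n = ∅ := by
    intro j n hjn
    apply Set.eq_empty_iff_forall_notMem.mpr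
    rintro x ⟨hxj, hxn⟩
    have : x ∈ closure (W n) ∩ A n := ⟨subset_closure hxn, hWA j n hjn (subset_closure hxj)⟩
    rw [(hW n).2.2.2.2] at this
    exact this
  have hcond1 : ∀ u ∈ Set.range W, IsOpen u ∧ u.Nonempty := by
    rintro u ⟨n, rfl⟩
    exact ⟨(hW n).1, (hW n).2.1⟩
  have hcond2 : (Set.range W).PairwiseDisjoint id := by
    rintro u ⟨i, rfl⟩ v ⟨j, rfl⟩ huv
    have hij : i ≠ j := fun h => huv (by rw [h])
    rcases hij.lt_or_gt with h | h
    · exact Set.disjoint_iff_inter_eq_empty.mpr (hdisj i j h)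
    · exact (Set.disjoint_iff_inter_eq_empty.mpr (hdisj j i h)).symm
  obtain ⟨K, hK, hKmeets⟩ := hcc (Set.range W) hcond1 hcond2
  have hHK : range f ⊆ K := by
    rintro x ⟨i, rfl⟩
    have hKcl : f i ∈ closure K := by
      rw [mem_closure_iff_nhds]
      intro N hN
      obtain ⟨k, -, hk⟩ := (hb i).toHasBasis.mem_iff.mp hN
      obtain ⟨x, hxK, hxW⟩ := hKmeets (W (Nat.pair i k)) ⟨_, rfl⟩
      refine ⟨x, hk ?_, hxK⟩
      have := (hW (Nat.pair i k)).2.2.1 hxW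
      rwa [Nat.unpair_pair] at this
    rwa [hK.isClosed.closure_eq] at hKcl
  exact hK.of_isClosed_subset isClosed_closure (closure_minimal hHK hK.isClosed)
end

section
/- Let X be a cellular-compact Hausdorff space and let I be its set of isolated points. Then the closure of I is compact. -/
open Set

theorem stmt16 {X : Type*} [TopologicalSpace X] [T2Space X] (hcc : CellularCompact X) :
    IsCompact (closure {x : X | IsOpen ({x} : Set X)}) := by
  obtain ⟨K, hK, hKmeet⟩ := hcc ((fun x => ({x} : Set X)) '' {x : X | IsOpen ({x} : Set X)})
    (by rintro u ⟨x, hx, rfl⟩; exact ⟨hx, ⟨x, rfl⟩⟩)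
    (by
      rintro u ⟨x, hx, rfl⟩ v ⟨y, hy, rfl⟩ hne
      simp only [id]
      exact Set.disjoint_singleton.mpr (by simpa using hne))
  have hIK : {x : X | IsOpen ({x} : Set X)} ⊆ K := by
    intro x hx
    obtain ⟨y, hyK, hy⟩ := hKmeet {x} ⟨x, hx, rfl⟩
    rcases hy with rfl
    exact hyK
  exact hK.of_isClosed_subset isClosed_closure (closure_minimal hIK hK.isClosed)
end
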